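/- arXiv:1504.01130 — 7 statements merged into one kernel-verified Lean document; each statement's English description precedes it below -/
import Mathlib

section
/- For every odd K ≥ 3, the maximum of f3^(K) over the simplex D^(K) is attained at the uniform point (1/K,…,1/K) and equals (1/24)·(1 − 1/K²). -/
/-- `f3^(K)(x) = Σ x_{i0} x_{i1} x_{i2}` over `0 ≤ i0 < i1 < i2 < K` with
`i1 - i0` and `i2 - i1` odd. -/
def f3 (K : ℕ) (x : Fin K → ℝ) : ℝ :=
  ∑ t ∈ Finset.univ.filter
      (fun t : Fin K × Fin K × Fin K =>
        t.1 < t.2.1 ∧ t.2.1 < t.2.2 ∧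
        Odd (t.2.1.val - t.1.val) ∧ Odd (t.2.2.val - t.2.1.val)),
    x t.1 * x t.2.1 * x t.2.2

/-- `f5^(K)(x) = Σ x_{i0} x_{i1} x_{i2} x_{i3} x_{i4}` over `0 ≤ i0 < ⋯ < i4 < K`
with all consecutive differences odd. -/
def f5 (K : ℕ) (x : Fin K → ℝ) : ℝ :=
  ∑ t ∈ Finset.univ.filter
      (fun t : Fin K × Fin K × Fin K × Fin K × Fin K =>
        t.1 < t.2.1 ∧ t.2.1 < t.2.2.1 ∧ t.2.2.1 < t.2.2.2.1 ∧ t.2.2.2.1 < t.2.2.2.2 ∧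
        Odd (t.2.1.val - t.1.val) ∧ Odd (t.2.2.1.val - t.2.1.val) ∧
        Odd (t.2.2.2.1.val - t.2.2.1.val) ∧ Odd (t.2.2.2.2.val - t.2.2.2.1.val)),
    x t.1 * x t.2.1 * x t.2.2.1 * x t.2.2.2.1 * x t.2.2.2.2

/-- `f^(K) := f3^(K) - 24 · f5^(K)`. -/
def fHerman (K : ℕ) (x : Fin K → ℝ) : ℝ := f3 K x - 24 * f5 K x

/-- The standard `(K-1)`-simplex `D^(K)`:
vectors `x ∈ [0,1]^K` with `x_0 + ⋯ + x_{K-1} = 1`. -/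
def simplexD (K : ℕ) : Set (Fin K → ℝ) :=
  {x | (∀ i, 0 ≤ x i ∧ x i ≤ 1) ∧ ∑ i, x i = 1}

namespace F3Proof

open Finset

noncomputable def sS (y : ℕ → ℝ) (n : ℕ) : ℝ := ∑ i ∈ range n, y i
noncomputable def sA (y : ℕ → ℝ) (n : ℕ) : ℝ := ∑ i ∈ range n, (-1 : ℝ) ^ i * y i
noncomputable def bB (y : ℕ → ℝ) (n : ℕ) : ℝ :=
  ∑ i ∈ range n, y i * (2 * sA y i + (-1 : ℝ) ^ i * y i)
noncomputable def aA (y : ℕ → ℝ) (n : ℕ) : ℝ :=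
  ∑ i ∈ range n, y i * (3 * (sA y i) ^ 2 + 3 * (-1 : ℝ) ^ i * y i * sA y i + (y i) ^ 2)

variable (y : ℕ → ℝ)

lemma sS_def (n : ℕ) : sS y n = ∑ i ∈ range n, y i := rfl
lemma sA_def (n : ℕ) : sA y n = ∑ i ∈ range n, (-1 : ℝ) ^ i * y i := rfl

lemma sS_succ (n : ℕ) : sS y (n + 1) = sS y n + y n := sum_range_succ _ n
lemma sA_succ (n : ℕ) : sA y (n + 1) = sA y n + (-1 : ℝ) ^ n * y n := sum_range_succ _ n
lemma bB_succ (n : ℕ) : bB y (n + 1) = bB y n + y n * (2 * sA y n + (-1 : ℝ) ^ n * y n) :=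
  sum_range_succ _ n
lemma aA_succ (n : ℕ) :
    aA y (n + 1) = aA y n + y n * (3 * (sA y n) ^ 2 + 3 * (-1 : ℝ) ^ n * y n * sA y n + (y n) ^ 2) :=
  sum_range_succ _ n

lemma sign_eq (i j : ℕ) (h : i ≤ j) : (-1 : ℝ) ^ j * (-1 : ℝ) ^ i = (-1 : ℝ) ^ (j - i) := by
  conv_lhs => rw [show j = (j - i) + i from (Nat.sub_add_cancel h).symm]
  rw [pow_add, mul_assoc, ← pow_add, Even.neg_one_pow ⟨i, rfl⟩, mul_one]

lemma odd_filter (g : ℕ → ℝ) (j : ℕ) :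
    ∑ i ∈ range j, (if Odd (j - i) then g i else 0)
      = ((∑ i ∈ range j, g i) - (-1 : ℝ) ^ j * ∑ i ∈ range j, (-1 : ℝ) ^ i * g i) / 2 := by
  rw [mul_sum, ← sum_sub_distrib, sum_div]
  refine sum_congr rfl fun i hi => ?_
  have hij : i ≤ j := le_of_lt (mem_range.mp hi)
  have hs : (-1 : ℝ) ^ j * ((-1 : ℝ) ^ i * g i) = (-1 : ℝ) ^ (j - i) * g i := by
    rw [← mul_assoc, sign_eq i j hij]
  rw [hs]
  rcases Nat.even_or_odd (j - i) with h | h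
  · rw [if_neg (Nat.not_odd_iff_even.mpr h), h.neg_one_pow]; ring
  · rw [if_pos h, h.neg_one_pow]; ring

lemma lemD : ∀ n : ℕ,
    ∑ j ∈ range n, y j * (sS y j - (-1 : ℝ) ^ j * sA y j) = ((sS y n) ^ 2 - (sA y n) ^ 2) / 2 := by
  intro n
  induction n with
  | zero => simp [sS, sA]
  | succ n ih =>
    rw [sum_range_succ, ih, sS_succ, sA_succ]
    rcases Nat.even_or_odd n with h | h <;> rw [h.neg_one_pow] <;> ring

lemma lemE : ∀ n : ℕ,
    ∑ j ∈ range n, (-1 : ℝ) ^ j * y j * (sS y j - (-1 : ℝ) ^ j * sA y j)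
      = sA y n * sS y n - bB y n := by
  intro n
  induction n with
  | zero => simp [sS, sA, bB]
  | succ n ih =>
    rw [sum_range_succ, ih, sS_succ, sA_succ, bB_succ]
    rcases Nat.even_or_odd n with h | h <;> rw [h.neg_one_pow] <;> ring

lemma lemMain : ∀ n : ℕ,
    ∑ k ∈ range n, y k *
        ((((sS y k) ^ 2 - (sA y k) ^ 2) / 2 - (-1 : ℝ) ^ k * (sA y k * sS y k - bB y k)) / 4)
      = (sS y n) ^ 3 / 24 - aA y n / 6 + sA y n * bB y n / 4 - (sA y n) ^ 2 * sS y n / 8 := by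
  intro n
  induction n with
  | zero => simp [sS, sA, bB, aA]
  | succ n ih =>
    rw [sum_range_succ, ih, sS_succ, sA_succ, bB_succ, aA_succ]
    rcases Nat.even_or_odd n with h | h <;> rw [h.neg_one_pow] <;> ring

lemma lemD2 (n : ℕ) :
    ∑ j ∈ range n, y j * ((sS y j - (-1 : ℝ) ^ j * sA y j) / 2)
      = ((sS y n) ^ 2 - (sA y n) ^ 2) / 4 := by
  have h : ∀ j ∈ range n, y j * ((sS y j - (-1 : ℝ) ^ j * sA y j) / 2)
      = (y j * (sS y j - (-1 : ℝ) ^ j * sA y j)) / 2 := fun j _ => by ring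
  rw [sum_congr rfl h, ← sum_div, lemD y n]
  ring

lemma lemE2 (n : ℕ) :
    ∑ j ∈ range n, (-1 : ℝ) ^ j * (y j * ((sS y j - (-1 : ℝ) ^ j * sA y j) / 2))
      = (sA y n * sS y n - bB y n) / 2 := by
  have h : ∀ j ∈ range n, (-1 : ℝ) ^ j * (y j * ((sS y j - (-1 : ℝ) ^ j * sA y j) / 2))
      = ((-1 : ℝ) ^ j * y j * (sS y j - (-1 : ℝ) ^ j * sA y j)) / 2 := fun j _ => by ring
  rw [sum_congr rfl h, ← sum_div, lemE y n]

lemma inner_closed (k : ℕ) :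
    ∑ j ∈ range k, (if Odd (k - j) then
        y j * (∑ i ∈ range j, if Odd (j - i) then y i else 0) else 0)
      = (((sS y k) ^ 2 - (sA y k) ^ 2) / 2 - (-1 : ℝ) ^ k * (sA y k * sS y k - bB y k)) / 4 := by
  have h1 : ∀ j ∈ range k, (if Odd (k - j) then
        y j * (∑ i ∈ range j, if Odd (j - i) then y i else 0) else 0)
      = (if Odd (k - j) then y j * ((sS y j - (-1 : ℝ) ^ j * sA y j) / 2) else 0) := by
    intro j _
    rw [odd_filter y j, ← sS_def, ← sA_def]
  rw [sum_congr rfl h1, odd_filter (fun j => y j * ((sS y j - (-1 : ℝ) ^ j * sA y j) / 2)) k,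
    lemD2 y k, lemE2 y k]
  ring

lemma key (n : ℕ) :
    ∑ i ∈ range n, y i *
        ((sA y i - sA y n / 2) ^ 2 + (sA y i - sA y n / 2) * (sA y (i + 1) - sA y n / 2)
          + (sA y (i + 1) - sA y n / 2) ^ 2)
      = aA y n - (3 * sA y n / 2) * bB y n + (3 * (sA y n) ^ 2 / 4) * sS y n := by
  rw [show aA y n - (3 * sA y n / 2) * bB y n + (3 * (sA y n) ^ 2 / 4) * sS y n
      = ∑ i ∈ range n,
          (y i * (3 * (sA y i) ^ 2 + 3 * (-1 : ℝ) ^ i * y i * sA y i + (y i) ^ 2)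
            - (3 * sA y n / 2) * (y i * (2 * sA y i + (-1 : ℝ) ^ i * y i))
            + (3 * (sA y n) ^ 2 / 4) * y i) from by
    rw [sum_add_distrib, sum_sub_distrib, ← mul_sum, ← mul_sum]; rfl]
  refine sum_congr rfl fun i _ => ?_
  rw [sA_succ y i]
  rcases Nat.even_or_odd i with h | h <;> rw [h.neg_one_pow] <;> ring

lemma sum_range_lt {m n : ℕ} (h : m ≤ n) (Q : ℕ → Prop) [DecidablePred Q] (v : ℕ → ℝ) :
    ∑ i ∈ range n, (if i < m ∧ Q i then v i else 0)
      = ∑ i ∈ range m, (if Q i then v i else 0) := by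
  rw [← Finset.sum_subset (Finset.range_subset_range.mpr h)
    (fun i _ hi => if_neg (fun hc => hi (mem_range.mpr hc.1)))]
  exact sum_congr rfl fun i hi => by simp [mem_range.mp hi]

lemma rearrange (K : ℕ) :
    ∑ a ∈ range K, ∑ b ∈ range K, ∑ c ∈ range K,
        (if a < b ∧ b < c ∧ Odd (b - a) ∧ Odd (c - b) then y a * y b * y c else 0)
      = ∑ k ∈ range K, y k * (∑ j ∈ range k, if Odd (k - j) then
          y j * (∑ i ∈ range j, if Odd (j - i) then y i else 0) else 0) := by
  rw [show (∑ a ∈ range K, ∑ b ∈ range K, ∑ c ∈ range K,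
        (if a < b ∧ b < c ∧ Odd (b - a) ∧ Odd (c - b) then y a * y b * y c else 0))
      = ∑ c ∈ range K, ∑ b ∈ range K, ∑ a ∈ range K,
        (if a < b ∧ b < c ∧ Odd (b - a) ∧ Odd (c - b) then y a * y b * y c else 0) from by
    calc (∑ a ∈ range K, ∑ b ∈ range K, ∑ c ∈ range K,
        (if a < b ∧ b < c ∧ Odd (b - a) ∧ Odd (c - b) then y a * y b * y c else 0))
        = ∑ a ∈ range K, ∑ c ∈ range K, ∑ b ∈ range K,
          (if a < b ∧ b < c ∧ Odd (b - a) ∧ Odd (c - b) then y a * y b * y c else 0) :=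
        sum_congr rfl fun a _ => sum_comm
      _ = ∑ c ∈ range K, ∑ a ∈ range K, ∑ b ∈ range K,
          (if a < b ∧ b < c ∧ Odd (b - a) ∧ Odd (c - b) then y a * y b * y c else 0) := sum_comm
      _ = ∑ c ∈ range K, ∑ b ∈ range K, ∑ a ∈ range K,
          (if a < b ∧ b < c ∧ Odd (b - a) ∧ Odd (c - b) then y a * y b * y c else 0) :=
        sum_congr rfl fun c _ => sum_comm]
  refine sum_congr rfl fun c hc => ?_
  have hcK : c ≤ K := le_of_lt (mem_range.mp hc)
  have h1 : ∀ b ∈ range K, (∑ a ∈ range K,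
        (if a < b ∧ b < c ∧ Odd (b - a) ∧ Odd (c - b) then y a * y b * y c else 0))
      = (if b < c ∧ Odd (c - b) then
          (y b * y c) * (∑ i ∈ range b, if Odd (b - i) then y i else 0) else 0) := by
    intro b hb
    have hbK : b ≤ K := le_of_lt (mem_range.mp hb)
    by_cases hbc : b < c ∧ Odd (c - b)
    · rw [if_pos hbc]
      have h2 : ∀ a ∈ range K,
          (if a < b ∧ b < c ∧ Odd (b - a) ∧ Odd (c - b) then y a * y b * y c else 0)
            = (if a < b ∧ Odd (b - a) then y a * y b * y c else 0) := by
        intro a _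
        by_cases ha : a < b ∧ Odd (b - a)
        · rw [if_pos ha, if_pos ⟨ha.1, hbc.1, ha.2, hbc.2⟩]
        · rw [if_neg ha, if_neg (fun hcon => ha ⟨hcon.1, hcon.2.2.1⟩)]
      rw [sum_congr rfl h2, sum_range_lt hbK (fun a => Odd (b - a)) (fun a => y a * y b * y c),
        mul_sum]
      refine sum_congr rfl fun a _ => ?_
      by_cases h : Odd (b - a)
      · rw [if_pos h, if_pos h]; ring
      · rw [if_neg h, if_neg h, mul_zero]
    · rw [if_neg hbc]
      refine sum_eq_zero fun a _ => if_neg (fun hcon => hbc ⟨hcon.2.1, hcon.2.2.2⟩)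
  rw [sum_congr rfl h1,
    sum_range_lt hcK (fun b => Odd (c - b))
      (fun b => (y b * y c) * (∑ i ∈ range b, if Odd (b - i) then y i else 0)),
    mul_sum]
  refine sum_congr rfl fun b _ => ?_
  by_cases h : Odd (c - b)
  · rw [if_pos h, if_pos h]; ring
  · rw [if_neg h, if_neg h, mul_zero]

lemma f3_as_ranges (K : ℕ) (x : Fin K → ℝ) (hyx : ∀ a : Fin K, y ↑a = x a) :
    f3 K x = ∑ a ∈ range K, ∑ b ∈ range K, ∑ c ∈ range K,
        (if a < b ∧ b < c ∧ Odd (b - a) ∧ Odd (c - b) then y a * y b * y c else 0) := by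
  unfold f3
  rw [sum_filter, Fintype.sum_prod_type]
  have h1 : ∀ a : Fin K, (∑ bc : Fin K × Fin K,
      if a < bc.1 ∧ bc.1 < bc.2 ∧ Odd (bc.1.val - a.val) ∧ Odd (bc.2.val - bc.1.val)
        then x a * x bc.1 * x bc.2 else 0)
      = ∑ b : Fin K, ∑ c : Fin K,
        (if (a : ℕ) < (b : ℕ) ∧ (b : ℕ) < (c : ℕ) ∧ Odd ((b : ℕ) - (a : ℕ)) ∧ Odd ((c : ℕ) - (b : ℕ))
          then y ↑a * y ↑b * y ↑c else 0) := by
    intro a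
    rw [Fintype.sum_prod_type]
    refine Fintype.sum_congr _ _ fun b => Fintype.sum_congr _ _ fun c => ?_
    rw [hyx a, hyx b, hyx c]
    rfl
  calc (∑ a : Fin K, ∑ bc : Fin K × Fin K,
      if a < bc.1 ∧ bc.1 < bc.2 ∧ Odd (bc.1.val - a.val) ∧ Odd (bc.2.val - bc.1.val)
        then x a * x bc.1 * x bc.2 else 0)
      = ∑ a : Fin K, ∑ b : Fin K, ∑ c : Fin K,
        (if (a : ℕ) < (b : ℕ) ∧ (b : ℕ) < (c : ℕ) ∧ Odd ((b : ℕ) - (a : ℕ)) ∧ Odd ((c : ℕ) - (b : ℕ))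
          then y ↑a * y ↑b * y ↑c else 0) := Fintype.sum_congr _ _ h1
    _ = ∑ a ∈ range K, ∑ b ∈ range K, ∑ c ∈ range K,
        (if a < b ∧ b < c ∧ Odd (b - a) ∧ Odd (c - b) then y a * y b * y c else 0) := by
      rw [← Fin.sum_univ_eq_sum_range (fun a => ∑ b ∈ range K, ∑ c ∈ range K,
        (if a < b ∧ b < c ∧ Odd (b - a) ∧ Odd (c - b) then y a * y b * y c else 0)) K]
      refine Fintype.sum_congr _ _ fun a => ?_
      rw [← Fin.sum_univ_eq_sum_range (fun b => ∑ c ∈ range K,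
        (if (a : ℕ) < b ∧ b < c ∧ Odd (b - (a : ℕ)) ∧ Odd (c - b) then y ↑a * y b * y c else 0)) K]
      refine Fintype.sum_congr _ _ fun b => ?_
      rw [← Fin.sum_univ_eq_sum_range (fun c =>
        (if (a : ℕ) < (b : ℕ) ∧ (b : ℕ) < c ∧ Odd ((b : ℕ) - (a : ℕ)) ∧ Odd (c - (b : ℕ))
          then y ↑a * y ↑b * y c else 0)) K]

/-- The master identity. -/
lemma f3_ident (K : ℕ) (x : Fin K → ℝ) (hyx : ∀ a : Fin K, y ↑a = x a) :
    f3 K x = (sS y K) ^ 3 / 24 - (1 / 6) * ∑ i ∈ range K, y i *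
        ((sA y i - sA y K / 2) ^ 2 + (sA y i - sA y K / 2) * (sA y (i + 1) - sA y K / 2)
          + (sA y (i + 1) - sA y K / 2) ^ 2) := by
  rw [f3_as_ranges y K x hyx, rearrange y K,
    sum_congr rfl (fun k _ => by rw [inner_closed y k]), lemMain y K, key y K]
  ring


lemma f3_le (K : ℕ) (hK : 0 < K) (x : Fin K → ℝ) (hx : x ∈ simplexD K) :
    f3 K x ≤ 1 / 24 * (1 - 1 / (K : ℝ) ^ 2) := by
  obtain ⟨hx01, hxsum⟩ := hx
  set y : ℕ → ℝ := fun i => if h : i < K then x ⟨i, h⟩ else 0 with hy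
  have hyx : ∀ a : Fin K, y ↑a = x a := fun a => by simp [hy, a.isLt]
  have hy0 : ∀ i, 0 ≤ y i := fun i => by
    by_cases h : i < K
    · simpa [hy, h] using (hx01 ⟨i, h⟩).1
    · simp [hy, h]
  have hKR : (0 : ℝ) < (K : ℝ) := by exact_mod_cast hK
  have hyS : sS y K = 1 := by
    rw [sS_def, ← Fin.sum_univ_eq_sum_range y K, Fintype.sum_congr _ _ hyx]
    exact hxsum
  rw [f3_ident y K x hyx, hyS]
  have hq : ∀ i ∈ range K, y i * ((y i) ^ 2 / 4)
      ≤ y i * ((sA y i - sA y K / 2) ^ 2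
          + (sA y i - sA y K / 2) * (sA y (i + 1) - sA y K / 2)
          + (sA y (i + 1) - sA y K / 2) ^ 2) := by
    intro i _
    refine mul_le_mul_of_nonneg_left ?_ (hy0 i)
    rw [sA_succ y i]
    rcases Nat.even_or_odd i with h | h <;> rw [h.neg_one_pow] <;>
      nlinarith [sq_nonneg (sA y i - sA y K / 2 + y i / 2),
        sq_nonneg (sA y i - sA y K / 2 - y i / 2)]
  have h3 : (1 : ℝ) / (K : ℝ) ^ 2 ≤ ∑ i ∈ range K, (y i) ^ 3 := by
    have h := pow_sum_div_card_le_sum_pow (s := range K) (f := y) (fun i _ => hy0 i) 2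
    rw [card_range] at h
    calc (1 : ℝ) / (K : ℝ) ^ 2 = (∑ i ∈ range K, y i) ^ (2 + 1) / (K : ℝ) ^ 2 := by
          rw [← sS_def, hyS]; norm_num
      _ ≤ ∑ i ∈ range K, (y i) ^ (2 + 1) := h
      _ = ∑ i ∈ range K, (y i) ^ 3 := rfl
  have hsum : (1 : ℝ) / (4 * (K : ℝ) ^ 2)
      ≤ ∑ i ∈ range K, y i * ((sA y i - sA y K / 2) ^ 2
          + (sA y i - sA y K / 2) * (sA y (i + 1) - sA y K / 2)
          + (sA y (i + 1) - sA y K / 2) ^ 2) := by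
    calc (1 : ℝ) / (4 * (K : ℝ) ^ 2) ≤ (∑ i ∈ range K, (y i) ^ 3) / 4 := by
          rw [div_le_div_iff₀ (by positivity) (by norm_num)]
          calc (1:ℝ) * 4 = (1/(K:ℝ)^2) * (4 * (K:ℝ)^2) := by field_simp
            _ ≤ (∑ i ∈ range K, (y i) ^ 3) * (4 * (K:ℝ)^2) := by
                apply mul_le_mul_of_nonneg_right h3 (by positivity)
      _ = ∑ i ∈ range K, y i * ((y i) ^ 2 / 4) := by
          rw [sum_div]; exact sum_congr rfl fun i _ => by ring
      _ ≤ _ := sum_le_sum hq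
  have hval : 1 / 24 * (1 - 1 / (K : ℝ) ^ 2)
      = (1 : ℝ) ^ 3 / 24 - 1 / 6 * (1 / (4 * (K : ℝ) ^ 2)) := by
    field_simp
    ring
  rw [hval]
  linarith

lemma f3_uniform (K : ℕ) (hK : 0 < K) (hodd : Odd K) :
    f3 K (fun _ : Fin K => (1 : ℝ) / K) = 1 / 24 * (1 - 1 / (K : ℝ) ^ 2) := by
  set y : ℕ → ℝ := fun i => if i < K then (1 : ℝ) / (K : ℝ) else 0 with hy
  have hyx : ∀ a : Fin K, y ↑a = (fun _ : Fin K => (1 : ℝ) / K) a := fun a => by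
    simp [hy, a.isLt]
  have hKR : (0 : ℝ) < (K : ℝ) := by exact_mod_cast hK
  have hK0 : (K : ℝ) ≠ 0 := ne_of_gt hKR
  have hsSK : sS y K = 1 := by
    rw [sS_def, sum_congr rfl (fun i hi => by simp [hy, mem_range.mp hi] :
      ∀ i ∈ range K, y i = 1 / (K : ℝ)), sum_const, card_range, nsmul_eq_mul]
    field_simp
  have hsA : ∀ n, n ≤ K → sA y n = if Even n then 0 else 1 / (K : ℝ) := by
    intro n
    induction n with
    | zero => intro _; simp [sA_def]
    | succ n ih =>
      intro hn
      have hnK : n < K := Nat.lt_of_succ_le hn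
      have hyn : y n = 1 / (K : ℝ) := by simp [hy, hnK]
      rw [sA_succ, ih hnK.le, hyn]
      rcases Nat.even_or_odd n with h | h
      · rw [if_pos h, h.neg_one_pow,
          if_neg (fun he => (Nat.even_add_one.mp he) h)]
        ring
      · rw [if_neg (Nat.not_even_iff_odd.mpr h), h.neg_one_pow,
          if_pos (Nat.even_add_one.mpr (Nat.not_even_iff_odd.mpr h))]
        ring
  have hsAK : sA y K = 1 / (K : ℝ) := by
    rw [hsA K le_rfl, if_neg (Nat.not_even_iff_odd.mpr hodd)]
  rw [f3_ident y K _ hyx, hsSK, hsAK]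
  have hterm : ∀ i ∈ range K, y i *
      ((sA y i - 1 / (K : ℝ) / 2) ^ 2
        + (sA y i - 1 / (K : ℝ) / 2) * (sA y (i + 1) - 1 / (K : ℝ) / 2)
        + (sA y (i + 1) - 1 / (K : ℝ) / 2) ^ 2) = 1 / (4 * (K : ℝ) ^ 3) := by
    intro i hi
    have hiK := mem_range.mp hi
    have hyi : y i = 1 / (K : ℝ) := by simp [hy, hiK]
    rw [hsA i hiK.le, hsA (i + 1) hiK, hyi]
    rcases Nat.even_or_odd i with h | h
    · rw [if_pos h, if_neg (fun he => (Nat.even_add_one.mp he) h)]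
      field_simp
      ring
    · rw [if_neg (Nat.not_even_iff_odd.mpr h),
        if_pos (Nat.even_add_one.mpr (Nat.not_even_iff_odd.mpr h))]
      field_simp
      ring
  rw [sum_congr rfl hterm, sum_const, card_range, nsmul_eq_mul]
  field_simp
  ring

end F3Proof

/-- **Maximum of `f3`** (Lemma 4): for every odd `K ≥ 3`, the maximum of `f3^(K)` over
the simplex `D^(K)` is attained at the uniform point `(1/K, …, 1/K)` and equals
`(1/24)·(1 - 1/K²)`. -/
theorem f3_max (K : ℕ) (hK : 3 ≤ K) (hKodd : Odd K) :
    (fun _ : Fin K => (1 : ℝ) / K) ∈ simplexD K ∧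
    IsMaxOn (f3 K) (simplexD K) (fun _ : Fin K => (1 : ℝ) / K) ∧
    f3 K (fun _ : Fin K => (1 : ℝ) / K) = (1 / 24) * (1 - 1 / (K : ℝ) ^ 2) := by
  have hK0 : 0 < K := by omega
  have hKR : (0 : ℝ) < (K : ℝ) := by exact_mod_cast hK0
  have hK1 : (1 : ℝ) ≤ (K : ℝ) := by exact_mod_cast hK0
  have hmem : (fun _ : Fin K => (1 : ℝ) / K) ∈ simplexD K := by
    refine ⟨fun i => ⟨by positivity, ?_⟩, ?_⟩
    · rw [div_le_one hKR]; exact hK1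
    · rw [Finset.sum_const, Finset.card_univ, Fintype.card_fin, nsmul_eq_mul]
      field_simp
  refine ⟨hmem, ?_, F3Proof.f3_uniform K hK0 hKodd⟩
  refine isMaxOn_iff.mpr fun x hx => ?_
  rw [F3Proof.f3_uniform K hK0 hKodd]
  exact F3Proof.f3_le K hK0 x hx
end

section
/- For every odd K ≥ 3, the function f^(K) is invariant under cyclic rotation of its arguments: f^(K)(x_0, x_1, …, x_{K-1}) = f^(K)(x_1, …, x_{K-1}, x_0) for all x ∈ ℝ^K. -/
lemma rot_val (K : ℕ) (hK : 3 ≤ K) (i : Fin K) :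
    (finRotate K i).val = if i.val = K - 1 then 0 else i.val + 1 := by
  obtain ⟨n, rfl⟩ : ∃ n, K = n + 1 := ⟨K - 1, by omega⟩
  rw [finRotate_succ_apply, Fin.val_add_one]
  simp [Fin.ext_iff, Fin.last]

lemma f3_rot (K : ℕ) (hK : 3 ≤ K) (hKodd : Odd K) (x : Fin K → ℝ) :
    f3 K (fun i => x (finRotate K i)) = f3 K x := by
  classical
  set r := finRotate K with hr
  have hrv : ∀ i : Fin K, (r i).val = if i.val = K - 1 then 0 else i.val + 1 :=
    rot_val K hK
  have hsv : ∀ i : Fin K, (r.symm i).val = if i.val = 0 then K - 1 else i.val - 1 := by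
    intro i
    have h1 := hrv (r.symm i)
    rw [Equiv.apply_symm_apply] at h1
    have h2 := (r.symm i).isLt
    have h3 := i.isLt
    split_ifs at h1 ⊢ <;> omega
  have hK2 : K % 2 = 1 := Nat.odd_iff.mp hKodd
  unfold f3
  refine Finset.sum_nbij'
    (i := fun t : Fin K × Fin K × Fin K =>
      if t.2.2.val = K - 1 then (r t.2.2, r t.1, r t.2.1) else (r t.1, r t.2.1, r t.2.2))
    (j := fun s : Fin K × Fin K × Fin K =>
      if s.1.val = 0 then (r.symm s.2.1, r.symm s.2.2, r.symm s.1)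
      else (r.symm s.1, r.symm s.2.1, r.symm s.2.2)) ?_ ?_ ?_ ?_ ?_
  · intro t ht
    have i1 := t.1.isLt; have i2 := t.2.1.isLt; have i3 := t.2.2.isLt
    simp only [Finset.mem_filter, Finset.mem_univ, true_and, Fin.lt_def, Nat.odd_iff] at ht
    beta_reduce
    split_ifs with h <;>
      simp only [Finset.mem_filter, Finset.mem_univ, true_and, Fin.lt_def, Nat.odd_iff, hrv] <;>
      split_ifs <;> omega
  · intro t ht
    have i1 := t.1.isLt; have i2 := t.2.1.isLt; have i3 := t.2.2.isLt
    simp only [Finset.mem_filter, Finset.mem_univ, true_and, Fin.lt_def, Nat.odd_iff] at ht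
    beta_reduce
    split_ifs with h <;>
      simp only [Finset.mem_filter, Finset.mem_univ, true_and, Fin.lt_def, Nat.odd_iff, hsv] <;>
      split_ifs <;> omega
  · intro t ht
    have i1 := t.1.isLt; have i2 := t.2.1.isLt; have i3 := t.2.2.isLt
    simp only [Finset.mem_filter, Finset.mem_univ, true_and, Fin.lt_def, Nat.odd_iff] at ht
    by_cases h : t.2.2.val = K - 1
    · simp only [if_pos h]
      have h0 : (r t.2.2).val = 0 := by rw [hrv]; simp [h]
      simp only [if_pos h0, Equiv.symm_apply_apply]
    · simp only [if_neg h]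
      have h0 : (r t.1).val ≠ 0 := by rw [hrv]; split_ifs <;> omega
      simp only [if_neg h0, Equiv.symm_apply_apply]
  · intro s hs
    have i1 := s.1.isLt; have i2 := s.2.1.isLt; have i3 := s.2.2.isLt
    simp only [Finset.mem_filter, Finset.mem_univ, true_and, Fin.lt_def, Nat.odd_iff] at hs
    by_cases h : s.1.val = 0
    · simp only [if_pos h]
      have h0 : (r.symm s.1).val = K - 1 := by rw [hsv]; simp [h]
      simp only [if_pos h0, Equiv.apply_symm_apply]
    · simp only [if_neg h]
      have h0 : (r.symm s.2.2).val ≠ K - 1 := by rw [hsv]; split_ifs <;> omega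
      simp only [if_neg h0, Equiv.apply_symm_apply]
  · intro t ht
    beta_reduce
    by_cases h : t.2.2.val = K - 1
    · simp only [if_pos h]
      ring
    · simp only [if_neg h]

lemma f5_rot (K : ℕ) (hK : 3 ≤ K) (hKodd : Odd K) (x : Fin K → ℝ) :
    f5 K (fun i => x (finRotate K i)) = f5 K x := by
  classical
  set r := finRotate K with hr
  have hrv : ∀ i : Fin K, (r i).val = if i.val = K - 1 then 0 else i.val + 1 :=
    rot_val K hK
  have hsv : ∀ i : Fin K, (r.symm i).val = if i.val = 0 then K - 1 else i.val - 1 := by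
    intro i
    have h1 := hrv (r.symm i)
    rw [Equiv.apply_symm_apply] at h1
    have h2 := (r.symm i).isLt
    have h3 := i.isLt
    split_ifs at h1 ⊢ <;> omega
  have hK2 : K % 2 = 1 := Nat.odd_iff.mp hKodd
  unfold f5
  refine Finset.sum_nbij'
    (i := fun t : Fin K × Fin K × Fin K × Fin K × Fin K =>
      if t.2.2.2.2.val = K - 1 then (r t.2.2.2.2, r t.1, r t.2.1, r t.2.2.1, r t.2.2.2.1)
      else (r t.1, r t.2.1, r t.2.2.1, r t.2.2.2.1, r t.2.2.2.2))
    (j := fun s : Fin K × Fin K × Fin K × Fin K × Fin K =>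
      if s.1.val = 0 then
        (r.symm s.2.1, r.symm s.2.2.1, r.symm s.2.2.2.1, r.symm s.2.2.2.2, r.symm s.1)
      else (r.symm s.1, r.symm s.2.1, r.symm s.2.2.1, r.symm s.2.2.2.1, r.symm s.2.2.2.2))
    ?_ ?_ ?_ ?_ ?_
  · intro t ht
    have i1 := t.1.isLt; have i2 := t.2.1.isLt; have i3 := t.2.2.1.isLt
    have i4 := t.2.2.2.1.isLt; have i5 := t.2.2.2.2.isLt
    simp only [Finset.mem_filter, Finset.mem_univ, true_and, Fin.lt_def, Nat.odd_iff] at ht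
    beta_reduce
    split_ifs with h <;>
      simp only [Finset.mem_filter, Finset.mem_univ, true_and, Fin.lt_def, Nat.odd_iff, hrv] <;>
      split_ifs <;> omega
  · intro t ht
    have i1 := t.1.isLt; have i2 := t.2.1.isLt; have i3 := t.2.2.1.isLt
    have i4 := t.2.2.2.1.isLt; have i5 := t.2.2.2.2.isLt
    simp only [Finset.mem_filter, Finset.mem_univ, true_and, Fin.lt_def, Nat.odd_iff] at ht
    beta_reduce
    split_ifs with h <;>
      simp only [Finset.mem_filter, Finset.mem_univ, true_and, Fin.lt_def, Nat.odd_iff, hsv] <;>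
      split_ifs <;> omega
  · intro t ht
    have i1 := t.1.isLt; have i2 := t.2.1.isLt; have i3 := t.2.2.1.isLt
    have i4 := t.2.2.2.1.isLt; have i5 := t.2.2.2.2.isLt
    simp only [Finset.mem_filter, Finset.mem_univ, true_and, Fin.lt_def, Nat.odd_iff] at ht
    by_cases h : t.2.2.2.2.val = K - 1
    · simp only [if_pos h]
      have h0 : (r t.2.2.2.2).val = 0 := by rw [hrv]; simp [h]
      simp only [if_pos h0, Equiv.symm_apply_apply]
    · simp only [if_neg h]
      have h0 : (r t.1).val ≠ 0 := by rw [hrv]; split_ifs <;> omega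
      simp only [if_neg h0, Equiv.symm_apply_apply]
  · intro s hs
    have i1 := s.1.isLt; have i2 := s.2.1.isLt; have i3 := s.2.2.1.isLt
    have i4 := s.2.2.2.1.isLt; have i5 := s.2.2.2.2.isLt
    simp only [Finset.mem_filter, Finset.mem_univ, true_and, Fin.lt_def, Nat.odd_iff] at hs
    by_cases h : s.1.val = 0
    · simp only [if_pos h]
      have h0 : (r.symm s.1).val = K - 1 := by rw [hsv]; simp [h]
      simp only [if_pos h0, Equiv.apply_symm_apply]
    · simp only [if_neg h]
      have h0 : (r.symm s.2.2.2.2).val ≠ K - 1 := by rw [hsv]; split_ifs <;> omega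
      simp only [if_neg h0, Equiv.apply_symm_apply]
  · intro t ht
    beta_reduce
    by_cases h : t.2.2.2.2.val = K - 1
    · simp only [if_pos h]
      ring
    · simp only [if_neg h]


/-- **Rotation symmetry** (Lemma 5(a)): for every odd `K ≥ 3`, the function `f^(K)` is
invariant under cyclic rotation of its arguments:
`f^(K)(x_0, x_1, …, x_{K-1}) = f^(K)(x_1, …, x_{K-1}, x_0)`.
(Here `finRotate K i = i + 1 (mod K)`, so `fun i => x (finRotate K i)` is the vector
`(x_1, …, x_{K-1}, x_0)`.) -/
theorem f_rotation_invariant (K : ℕ) (hK : 3 ≤ K) (hKodd : Odd K) (x : Fin K → ℝ) :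
    fHerman K x = fHerman K (fun i => x (finRotate K i)) := by
  unfold fHerman
  rw [f3_rot K hK hKodd x, f5_rot K hK hKodd x]
end

section
/- For every odd K ≥ 5 and all real numbers x_0, x_2, x_3, …, x_{K-1}, one has f^(K)(x_0, 0, x_2, x_3, …, x_{K-1}) = f^(K−2)(x_0 + x_2, x_3, …, x_{K-1}). -/
open Finset

noncomputable def Xe (K : ℕ) (x : Fin K → ℝ) : ℕ → ℝ := fun n => if h : n < K then x ⟨n, h⟩ else 0

noncomputable def G (X : ℕ → ℝ) (M : ℕ) : ℕ → ℕ → ℝ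
  | 0 => fun _ => 1
  | n+1 => fun a => ∑ b ∈ Finset.range M, if a < b ∧ Odd (b - a) then X b * G X M n b else 0

lemma sum3 (K : ℕ) (g : ℕ → ℕ → ℕ → ℝ) :
    (∑ a : Fin K, ∑ b : Fin K, ∑ c : Fin K, g a b c) =
    ∑ a ∈ range K, ∑ b ∈ range K, ∑ c ∈ range K, g a b c := by
  rw [Fin.sum_univ_eq_sum_range (fun n => ∑ b : Fin K, ∑ c : Fin K, g n ↑b ↑c) K]
  refine Finset.sum_congr rfl fun a _ => ?_
  rw [Fin.sum_univ_eq_sum_range (fun n => ∑ c : Fin K, g a n ↑c) K]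
  exact Finset.sum_congr rfl fun b _ => Fin.sum_univ_eq_sum_range (fun n => g a b n) K

lemma sum5 (K : ℕ) (g : ℕ → ℕ → ℕ → ℕ → ℕ → ℝ) :
    (∑ a : Fin K, ∑ b : Fin K, ∑ c : Fin K, ∑ d : Fin K, ∑ e : Fin K, g a b c d e) =
    ∑ a ∈ range K, ∑ b ∈ range K, ∑ c ∈ range K, ∑ d ∈ range K, ∑ e ∈ range K, g a b c d e := by
  rw [Fin.sum_univ_eq_sum_range
    (fun n => ∑ b : Fin K, ∑ c : Fin K, ∑ d : Fin K, ∑ e : Fin K, g n ↑b ↑c ↑d ↑e) K]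
  refine Finset.sum_congr rfl fun a _ => ?_
  rw [Fin.sum_univ_eq_sum_range (fun n => ∑ c : Fin K, ∑ d : Fin K, ∑ e : Fin K, g a n ↑c ↑d ↑e) K]
  refine Finset.sum_congr rfl fun b _ => ?_
  rw [Fin.sum_univ_eq_sum_range (fun n => ∑ d : Fin K, ∑ e : Fin K, g a b n ↑d ↑e) K]
  refine Finset.sum_congr rfl fun c _ => ?_
  rw [Fin.sum_univ_eq_sum_range (fun n => ∑ e : Fin K, g a b c n ↑e) K]
  exact Finset.sum_congr rfl fun d _ => Fin.sum_univ_eq_sum_range (fun n => g a b c d n) K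

lemma f3_eq (K : ℕ) (x : Fin K → ℝ) :
    f3 K x = ∑ a ∈ Finset.range K, Xe K x a * G (Xe K x) K 2 a := by
  classical
  set X := Xe K x with hX
  have hx : ∀ a : Fin K, x a = X a.val := fun a => by simp [hX, Xe, a.isLt]
  rw [f3, Finset.sum_filter]
  simp only [Fintype.sum_prod_type, hx, Fin.lt_def]
  rw [sum3 K (fun a b c =>
    if a < b ∧ b < c ∧ Odd (b - a) ∧ Odd (c - b) then X a * X b * X c else 0)]
  simp only [G, Finset.mul_sum, mul_ite, mul_zero, mul_one]
  refine Finset.sum_congr rfl fun a _ => Finset.sum_congr rfl fun b _ => ?_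
  by_cases hab : a < b ∧ Odd (b - a)
  · rw [if_pos hab]
    refine Finset.sum_congr rfl fun c _ => ?_
    simp only [hab.1, hab.2, true_and]
    split_ifs with h
    · ring
    · rfl
  · rw [if_neg hab]
    refine Finset.sum_eq_zero fun c _ => ?_
    rw [if_neg]
    rintro ⟨h1, _, h2, _⟩
    exact hab ⟨h1, h2⟩

lemma f5_eq (K : ℕ) (x : Fin K → ℝ) :
    f5 K x = ∑ a ∈ Finset.range K, Xe K x a * G (Xe K x) K 4 a := by
  classical
  set X := Xe K x with hX
  have hx : ∀ a : Fin K, x a = X a.val := fun a => by simp [hX, Xe, a.isLt]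
  rw [f5, Finset.sum_filter]
  simp only [Fintype.sum_prod_type, hx, Fin.lt_def]
  rw [sum5 K (fun a b c d e =>
    if a < b ∧ b < c ∧ c < d ∧ d < e ∧ Odd (b - a) ∧ Odd (c - b) ∧ Odd (d - c) ∧ Odd (e - d)
    then X a * X b * X c * X d * X e else 0)]
  simp only [G, Finset.mul_sum, mul_ite, mul_zero, mul_one]
  refine Finset.sum_congr rfl fun a _ => Finset.sum_congr rfl fun b _ => ?_
  by_cases hab : a < b ∧ Odd (b - a)
  · rw [if_pos hab]
    refine Finset.sum_congr rfl fun c _ => ?_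
    by_cases hbc : b < c ∧ Odd (c - b)
    · rw [if_pos hbc]
      refine Finset.sum_congr rfl fun d _ => ?_
      by_cases hcd : c < d ∧ Odd (d - c)
      · rw [if_pos hcd]
        refine Finset.sum_congr rfl fun e _ => ?_
        simp only [hab.1, hab.2, hbc.1, hbc.2, hcd.1, hcd.2, true_and]
        split_ifs with h
        · ring
        · rfl
      · rw [if_neg hcd]
        refine Finset.sum_eq_zero fun e _ => ?_
        rw [if_neg]
        rintro ⟨_, _, h1, _, _, _, h2, _⟩
        exact hcd ⟨h1, h2⟩
    · rw [if_neg hbc]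
      refine Finset.sum_eq_zero fun d _ => Finset.sum_eq_zero fun e _ => ?_
      rw [if_neg]
      rintro ⟨_, h1, _, _, _, h2, _, _⟩
      exact hbc ⟨h1, h2⟩
  · rw [if_neg hab]
    refine Finset.sum_eq_zero fun c _ => Finset.sum_eq_zero fun d _ =>
      Finset.sum_eq_zero fun e _ => ?_
    rw [if_neg]
    rintro ⟨h1, _, _, _, h2, _⟩
    exact hab ⟨h1, h2⟩

lemma G_shift (X Y : ℕ → ℝ) (K' : ℕ) (hY : ∀ b, 1 ≤ b → Y b = X (b + 2)) :
    ∀ n j, G Y K' n j = G X (K' + 2) n (j + 2) := by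
  intro n
  induction n with
  | zero => intro j; rfl
  | succ n ih =>
    intro j
    show (∑ b ∈ Finset.range K', if j < b ∧ Odd (b - j) then Y b * G Y K' n b else 0) =
      ∑ b ∈ Finset.range (K' + 2),
        if j + 2 < b ∧ Odd (b - (j + 2)) then X b * G X (K' + 2) n b else 0
    rw [Finset.sum_range_succ', Finset.sum_range_succ']
    rw [if_neg (by omega), if_neg (by omega), add_zero, add_zero]
    refine Finset.sum_congr rfl fun b _ => ?_
    have hc : (j + 2 < b + 1 + 1 ∧ Odd (b + 1 + 1 - (j + 2))) ↔ (j < b ∧ Odd (b - j)) := by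
      rw [Nat.odd_iff, Nat.odd_iff]
      omega
    rw [if_congr hc rfl rfl]
    split_ifs with h
    · rw [hY b (by omega), ih b]
    · rfl

lemma G02 (X : ℕ → ℝ) (M n : ℕ) (hX1 : X 1 = 0) : G X M n 0 = G X M n 2 := by
  cases n with
  | zero => rfl
  | succ n =>
    show (∑ b ∈ Finset.range M, if 0 < b ∧ Odd (b - 0) then X b * G X M n b else 0) =
      ∑ b ∈ Finset.range M, if 2 < b ∧ Odd (b - 2) then X b * G X M n b else 0
    refine Finset.sum_congr rfl fun b _ => ?_
    match b with
    | 0 => simp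
    | 1 => simp [hX1]
    | 2 => norm_num
    | (b + 3) =>
      have hc : (0 < b + 3 ∧ Odd (b + 3 - 0)) ↔ (2 < b + 3 ∧ Odd (b + 3 - 2)) := by
        rw [Nat.odd_iff, Nat.odd_iff]; omega
      rw [if_congr hc rfl rfl]

lemma S_eq (X Y : ℕ → ℝ) (K' : ℕ) (hK' : 1 ≤ K') (hX1 : X 1 = 0)
    (hY0 : Y 0 = X 0 + X 2) (hY : ∀ b, 1 ≤ b → Y b = X (b + 2)) (n : ℕ) :
    (∑ a ∈ Finset.range (K' + 2), X a * G X (K' + 2) n a) =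
    ∑ a ∈ Finset.range K', Y a * G Y K' n a := by
  obtain ⟨m, rfl⟩ : ∃ m, K' = m + 1 := ⟨K' - 1, by omega⟩
  rw [Finset.sum_range_succ' (fun a => X a * G X (m + 1 + 2) n a),
      Finset.sum_range_succ' (fun a => X (a + 1) * G X (m + 1 + 2) n (a + 1)),
      Finset.sum_range_succ' (fun a => X (a + 1 + 1) * G X (m + 1 + 2) n (a + 1 + 1)),
      Finset.sum_range_succ' (fun a => Y a * G Y (m + 1) n a)]
  have h1 : X (0 + 1) * G X (m + 1 + 2) n (0 + 1) = 0 := by rw [hX1]; ring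
  have h2 : ∀ a, X (a + 1 + 1 + 1) * G X (m + 1 + 2) n (a + 1 + 1 + 1)
      = Y (a + 1) * G Y (m + 1) n (a + 1) := by
    intro a
    rw [hY (a + 1) (by omega), G_shift X Y (m + 1) hY n (a + 1)]
  have h3 : X (0 + 1 + 1) * G X (m + 1 + 2) n (0 + 1 + 1) + X 0 * G X (m + 1 + 2) n 0
      = Y 0 * G Y (m + 1) n 0 := by
    rw [hY0, G_shift X Y (m + 1) hY n 0, G02 X (m + 1 + 2) n hX1]
    norm_num
    ring
  rw [h1]
  simp only [h2]
  rw [← h3]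
  ring

lemma main_contract (K' : ℕ) (hK' : 3 ≤ K') (x : Fin (K' + 2) → ℝ)
    (hx1 : x ⟨1, by omega⟩ = 0) (y : Fin K' → ℝ)
    (hy0 : y ⟨0, by omega⟩ = x ⟨0, by omega⟩ + x ⟨2, by omega⟩)
    (hyj : ∀ j : Fin K', j.val ≠ 0 → y j = x ⟨j.val + 2, by have := j.isLt; omega⟩) :
    fHerman (K' + 2) x = fHerman K' y := by
  have hX1 : Xe (K' + 2) x 1 = 0 := by
    simp only [Xe]; rw [dif_pos (by omega : (1:ℕ) < K' + 2)]; exact hx1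
  have hY0 : Xe K' y 0 = Xe (K' + 2) x 0 + Xe (K' + 2) x 2 := by
    simp only [Xe]
    rw [dif_pos (by omega : (0:ℕ) < K'), dif_pos (by omega : (0:ℕ) < K' + 2),
        dif_pos (by omega : (2:ℕ) < K' + 2)]
    exact hy0
  have hYb : ∀ b, 1 ≤ b → Xe K' y b = Xe (K' + 2) x (b + 2) := by
    intro b hb
    simp only [Xe]
    by_cases hbK : b < K'
    · rw [dif_pos hbK, dif_pos (by omega : b + 2 < K' + 2)]
      exact hyj ⟨b, hbK⟩ (by show b ≠ 0; omega)
    · rw [dif_neg hbK, dif_neg (by omega)]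
  rw [fHerman, fHerman, f3_eq, f5_eq, f3_eq, f5_eq,
      ← S_eq (Xe (K' + 2) x) (Xe K' y) K' (by omega) hX1 hY0 hYb 2,
      ← S_eq (Xe (K' + 2) x) (Xe K' y) K' (by omega) hX1 hY0 hYb 4]


/-- **Continuity property** (Lemma 5(b)): for every odd `K ≥ 5` and all reals
`x_0, x_2, x_3, …, x_{K-1}`,
`f^(K)(x_0, 0, x_2, x_3, …, x_{K-1}) = f^(K-2)(x_0 + x_2, x_3, …, x_{K-1})`. -/
theorem f_contract (K : ℕ) (hK : 5 ≤ K) (hKodd : Odd K) (x : Fin K → ℝ)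
    (hx1 : x ⟨1, by omega⟩ = 0) :
    fHerman K x =
      fHerman (K - 2) (fun j =>
        if j.val = 0 then x ⟨0, by omega⟩ + x ⟨2, by omega⟩
        else x ⟨j.val + 2, by have := j.isLt; omega⟩) := by
  obtain ⟨K', rfl⟩ : ∃ K', K = K' + 2 := ⟨K - 2, by omega⟩
  have h3 : 3 ≤ K' := by omega
  exact main_contract K' h3 x hx1
    (fun j => if j.val = 0 then x ⟨0, by omega⟩ + x ⟨2, by omega⟩
      else x ⟨j.val + 2, by have := j.isLt; omega⟩)
    (by simp) (fun j hj => by simp [hj])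
end

section
/- Let K ≥ 5 be odd and let v be an interior local maximum of f^(K). Then Σ_{3≤i3<i4<K, i3 odd, i4 even} v_{i3} v_{i4} ≤ 1/24, and the same inequality holds when every index i is replaced by (i+k) mod K for any k ∈ {0,…,K−1}. -/
/-- `v` is an interior local maximum of `f^(K)` on `D^(K)`: all coordinates of `v` are
strictly positive and `v` is a local maximum of the restriction of `f^(K)` to `D^(K)`. -/
def IsInteriorLocalMax (K : ℕ) (v : Fin K → ℝ) : Prop :=
  v ∈ simplexD K ∧ (∀ i, 0 < v i) ∧ IsLocalMaxOn (fHerman K) (simplexD K) v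

/-! ### Auxiliary machinery -/

section Aux

variable {K : ℕ}

lemma val_add_one (hK : 5 ≤ K) (u : Fin K) :
    ((u + ⟨1, by omega⟩ : Fin K)).val = if u.val = K - 1 then 0 else u.val + 1 := by
  have := u.isLt
  rw [Fin.add_def]
  simp only
  split_ifs with h
  · have : u.val + 1 = K := by omega
    simp [this]
  · exact Nat.mod_eq_of_lt (by omega)

lemma val_sub_one (hK : 5 ≤ K) (u : Fin K) :
    ((u - ⟨1, by omega⟩ : Fin K)).val = if u.val = 0 then K - 1 else u.val - 1 := by
  have := u.isLt
  rw [Fin.sub_def]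
  simp only
  split_ifs with h
  · rw [h]
    exact Nat.mod_eq_of_lt (by omega)
  · have : K - 1 + u.val = (u.val - 1) + K := by omega
    rw [this, Nat.add_mod_right]
    exact Nat.mod_eq_of_lt (by omega)

lemma add_one_sub_one (hK : 5 ≤ K) (u : Fin K) :
    u + ⟨1, by omega⟩ - ⟨1, by omega⟩ = u := by
  have := u.isLt
  apply Fin.ext
  rw [val_sub_one hK, val_add_one hK]
  split_ifs <;> first | omega | simp_all

lemma sub_one_add_one (hK : 5 ≤ K) (u : Fin K) :
    u - ⟨1, by omega⟩ + ⟨1, by omega⟩ = u := by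
  have := u.isLt
  apply Fin.ext
  rw [val_add_one hK, val_sub_one hK]
  split_ifs <;> first | omega | simp_all

/-! ### Shift invariance of `f3`, `f5`, `fHerman` -/

lemma f3_shift_one (hK : 5 ≤ K) (hKodd : Odd K) (x : Fin K → ℝ) :
    f3 K (fun i => x (i + ⟨1, by omega⟩)) = f3 K x := by
  have hK2 : K % 2 = 1 := Nat.odd_iff.mp hKodd
  unfold f3
  refine Finset.sum_nbij'
    (fun t => if t.2.2.val = K - 1 then (t.2.2 + ⟨1, by omega⟩, t.1 + ⟨1, by omega⟩, t.2.1 + ⟨1, by omega⟩)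
      else (t.1 + ⟨1, by omega⟩, t.2.1 + ⟨1, by omega⟩, t.2.2 + ⟨1, by omega⟩))
    (fun s => if s.1.val = 0 then (s.2.1 - ⟨1, by omega⟩, s.2.2 - ⟨1, by omega⟩, s.1 - ⟨1, by omega⟩)
      else (s.1 - ⟨1, by omega⟩, s.2.1 - ⟨1, by omega⟩, s.2.2 - ⟨1, by omega⟩))
    ?_ ?_ ?_ ?_ ?_
  · rintro ⟨u0, u1, u2⟩ ht
    simp only [Finset.mem_filter, Finset.mem_univ, true_and, Fin.lt_def, Nat.odd_iff] at ht
    have h0 := u0.isLt; have h1 := u1.isLt; have h2 := u2.isLt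
    dsimp only
    split_ifs with h <;>
      simp only [Finset.mem_filter, Finset.mem_univ, true_and, Fin.lt_def, val_add_one hK,
        Nat.odd_iff] <;>
      split_ifs <;> omega
  · rintro ⟨u0, u1, u2⟩ hs
    simp only [Finset.mem_filter, Finset.mem_univ, true_and, Fin.lt_def, Nat.odd_iff] at hs
    have h0 := u0.isLt; have h1 := u1.isLt; have h2 := u2.isLt
    dsimp only
    split_ifs with h <;>
      simp only [Finset.mem_filter, Finset.mem_univ, true_and, Fin.lt_def, val_sub_one hK,
        Nat.odd_iff] <;>
      split_ifs <;> omega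
  · rintro ⟨u0, u1, u2⟩ ht
    simp only [Finset.mem_filter, Finset.mem_univ, true_and, Fin.lt_def, Nat.odd_iff] at ht
    have h0 := u0.isLt; have h1 := u1.isLt; have h2 := u2.isLt
    dsimp only
    by_cases h : u2.val = K - 1
    · rw [if_pos h]
      have hc : ((u2 + ⟨1, by omega⟩ : Fin K)).val = 0 := by
        rw [val_add_one hK]; simp [h]
      dsimp only
      rw [if_pos hc]
      simp [add_one_sub_one hK]
    · rw [if_neg h]
      have hc : ¬((u0 + ⟨1, by omega⟩ : Fin K)).val = 0 := by
        rw [val_add_one hK, if_neg (by omega : ¬ u0.val = K - 1)]; omega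
      dsimp only
      rw [if_neg hc]
      simp [add_one_sub_one hK]
  · rintro ⟨u0, u1, u2⟩ hs
    simp only [Finset.mem_filter, Finset.mem_univ, true_and, Fin.lt_def, Nat.odd_iff] at hs
    have h0 := u0.isLt; have h1 := u1.isLt; have h2 := u2.isLt
    dsimp only
    by_cases h : u0.val = 0
    · rw [if_pos h]
      have hc : ((u0 - ⟨1, by omega⟩ : Fin K)).val = K - 1 := by
        rw [val_sub_one hK]; simp [h]
      dsimp only
      rw [if_pos hc]
      simp [sub_one_add_one hK]
    · rw [if_neg h]
      have hc : ¬((u2 - ⟨1, by omega⟩ : Fin K)).val = K - 1 := by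
        rw [val_sub_one hK, if_neg (by omega : ¬ u2.val = 0)]; omega
      dsimp only
      rw [if_neg hc]
      simp [sub_one_add_one hK]
  · rintro ⟨u0, u1, u2⟩ ht
    dsimp only
    split_ifs <;> ring

lemma f5_shift_one (hK : 5 ≤ K) (hKodd : Odd K) (x : Fin K → ℝ) :
    f5 K (fun i => x (i + ⟨1, by omega⟩)) = f5 K x := by
  have hK2 : K % 2 = 1 := Nat.odd_iff.mp hKodd
  unfold f5
  refine Finset.sum_nbij'
    (fun t => if t.2.2.2.2.val = K - 1 then
        (t.2.2.2.2 + ⟨1, by omega⟩, t.1 + ⟨1, by omega⟩, t.2.1 + ⟨1, by omega⟩,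
          t.2.2.1 + ⟨1, by omega⟩, t.2.2.2.1 + ⟨1, by omega⟩)
      else (t.1 + ⟨1, by omega⟩, t.2.1 + ⟨1, by omega⟩, t.2.2.1 + ⟨1, by omega⟩,
          t.2.2.2.1 + ⟨1, by omega⟩, t.2.2.2.2 + ⟨1, by omega⟩))
    (fun s => if s.1.val = 0 then
        (s.2.1 - ⟨1, by omega⟩, s.2.2.1 - ⟨1, by omega⟩, s.2.2.2.1 - ⟨1, by omega⟩,
          s.2.2.2.2 - ⟨1, by omega⟩, s.1 - ⟨1, by omega⟩)
      else (s.1 - ⟨1, by omega⟩, s.2.1 - ⟨1, by omega⟩, s.2.2.1 - ⟨1, by omega⟩,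
          s.2.2.2.1 - ⟨1, by omega⟩, s.2.2.2.2 - ⟨1, by omega⟩))
    ?_ ?_ ?_ ?_ ?_
  · rintro ⟨u0, u1, u2, u3, u4⟩ ht
    simp only [Finset.mem_filter, Finset.mem_univ, true_and, Fin.lt_def, Nat.odd_iff] at ht
    have h0 := u0.isLt; have h1 := u1.isLt; have h2 := u2.isLt
    have h3 := u3.isLt; have h4 := u4.isLt
    dsimp only
    split_ifs with h <;>
      simp only [Finset.mem_filter, Finset.mem_univ, true_and, Fin.lt_def, val_add_one hK,
        Nat.odd_iff] <;>
      split_ifs <;> omega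
  · rintro ⟨u0, u1, u2, u3, u4⟩ hs
    simp only [Finset.mem_filter, Finset.mem_univ, true_and, Fin.lt_def, Nat.odd_iff] at hs
    have h0 := u0.isLt; have h1 := u1.isLt; have h2 := u2.isLt
    have h3 := u3.isLt; have h4 := u4.isLt
    dsimp only
    split_ifs with h <;>
      simp only [Finset.mem_filter, Finset.mem_univ, true_and, Fin.lt_def, val_sub_one hK,
        Nat.odd_iff] <;>
      split_ifs <;> omega
  · rintro ⟨u0, u1, u2, u3, u4⟩ ht
    simp only [Finset.mem_filter, Finset.mem_univ, true_and, Fin.lt_def, Nat.odd_iff] at ht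
    have h0 := u0.isLt; have h1 := u1.isLt; have h2 := u2.isLt
    have h3 := u3.isLt; have h4 := u4.isLt
    dsimp only
    by_cases h : u4.val = K - 1
    · rw [if_pos h]
      have hc : ((u4 + ⟨1, by omega⟩ : Fin K)).val = 0 := by
        rw [val_add_one hK]; simp [h]
      dsimp only
      rw [if_pos hc]
      simp [add_one_sub_one hK]
    · rw [if_neg h]
      have hc : ¬((u0 + ⟨1, by omega⟩ : Fin K)).val = 0 := by
        rw [val_add_one hK, if_neg (by omega : ¬ u0.val = K - 1)]; omega
      dsimp only
      rw [if_neg hc]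
      simp [add_one_sub_one hK]
  · rintro ⟨u0, u1, u2, u3, u4⟩ hs
    simp only [Finset.mem_filter, Finset.mem_univ, true_and, Fin.lt_def, Nat.odd_iff] at hs
    have h0 := u0.isLt; have h1 := u1.isLt; have h2 := u2.isLt
    have h3 := u3.isLt; have h4 := u4.isLt
    dsimp only
    by_cases h : u0.val = 0
    · rw [if_pos h]
      have hc : ((u0 - ⟨1, by omega⟩ : Fin K)).val = K - 1 := by
        rw [val_sub_one hK]; simp [h]
      dsimp only
      rw [if_pos hc]
      simp [sub_one_add_one hK]
    · rw [if_neg h]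
      have hc : ¬((u4 - ⟨1, by omega⟩ : Fin K)).val = K - 1 := by
        rw [val_sub_one hK, if_neg (by omega : ¬ u4.val = 0)]; omega
      dsimp only
      rw [if_neg hc]
      simp [sub_one_add_one hK]
  · rintro ⟨u0, u1, u2, u3, u4⟩ ht
    dsimp only
    split_ifs <;> ring

lemma fHerman_shift_one (hK : 5 ≤ K) (hKodd : Odd K) (x : Fin K → ℝ) :
    fHerman K (fun i => x (i + ⟨1, by omega⟩)) = fHerman K x := by
  unfold fHerman
  rw [f3_shift_one hK hKodd, f5_shift_one hK hKodd]

lemma fin_add_sub_cancel {K : ℕ} (u c : Fin K) : u + c - c = u := by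
  have hc := c.isLt; have hu := u.isLt
  apply Fin.ext
  rw [Fin.sub_def, Fin.add_def]
  simp only
  rw [Nat.add_mod_mod]
  have h : K - ↑c + (↑u + ↑c) = K + ↑u := by omega
  rw [h, Nat.add_mod_left]
  exact Nat.mod_eq_of_lt hu

lemma fin_sub_add_cancel {K : ℕ} (u c : Fin K) : u - c + c = u := by
  have hc := c.isLt; have hu := u.isLt
  apply Fin.ext
  rw [Fin.add_def, Fin.sub_def]
  simp only
  rw [Nat.mod_add_mod]
  have h : K - ↑c + ↑u + ↑c = K + ↑u := by omega
  rw [h, Nat.add_mod_left]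
  exact Nat.mod_eq_of_lt hu

/-- Adding `c` as an equivalence of `Fin K` (raw `Fin` operations). -/
def finShiftEquiv {K : ℕ} (c : Fin K) : Fin K ≃ Fin K :=
  ⟨fun i => i + c, fun i => i - c, fun i => fin_add_sub_cancel i c,
    fun i => fin_sub_add_cancel i c⟩

lemma fHerman_shift (hK : 5 ≤ K) (hKodd : Odd K) (x : Fin K → ℝ) (c : Fin K) :
    fHerman K (fun i => x (i + c)) = fHerman K x := by
  suffices h : ∀ n : ℕ, ∀ hn : n < K, fHerman K (fun i => x (i + ⟨n, hn⟩)) = fHerman K x by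
    have h2 := h c.val c.isLt
    simpa using h2
  intro n
  induction n with
  | zero =>
    intro hn
    have h0 : ∀ i : Fin K, i + ⟨0, hn⟩ = i := by
      intro i
      apply Fin.ext
      rw [Fin.add_def]
      simpa using Nat.mod_eq_of_lt i.isLt
    simp only [h0]
  | succ n ih =>
    intro hn
    have hn' : n < K := by omega
    have heq : (fun i => x (i + ⟨n + 1, hn⟩))
        = fun i => (fun j => x (j + ⟨n, hn'⟩)) (i + ⟨1, by omega⟩) := by
      funext i
      simp only
      congr 1
      apply Fin.ext
      rw [Fin.add_def, Fin.add_def, Fin.add_def]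
      simp only
      rw [Nat.mod_add_mod]
      congr 1
      omega
    rw [heq]
    have e1 := fHerman_shift_one hK hKodd (fun j => x (j + ⟨n, hn'⟩))
    have e2 := ih hn'
    exact e1.trans e2

lemma simplexD_shift (hK : 5 ≤ K) (c : Fin K) (x : Fin K → ℝ) (hx : x ∈ simplexD K) :
    (fun i => x (i + c)) ∈ simplexD K := by
  refine ⟨fun i => hx.1 _, ?_⟩
  have := Equiv.sum_comp (finShiftEquiv c) x
  simp only [finShiftEquiv, Equiv.coe_fn_mk] at this
  rw [this]
  exact hx.2

lemma isLocalMax_shift (hK : 5 ≤ K) (hKodd : Odd K) (v : Fin K → ℝ)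
    (hmax : IsLocalMaxOn (fHerman K) (simplexD K) v) (c : Fin K) :
    IsLocalMaxOn (fHerman K) (simplexD K) (fun i => v (i + c)) := by
  have hmem : {x | fHerman K x ≤ fHerman K v} ∈ nhdsWithin v (simplexD K) := hmax
  obtain ⟨ε, hε, H⟩ := Metric.mem_nhdsWithin_iff.mp hmem
  have goal : {x | fHerman K x ≤ fHerman K (fun i => v (i + c))} ∈
      nhdsWithin (fun i => v (i + c)) (simplexD K) := by
    refine Metric.mem_nhdsWithin_iff.mpr ⟨ε, hε, ?_⟩
    rintro x ⟨hxball, hxS⟩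
    set y : Fin K → ℝ := fun i => x (i - c) with hy
    have hxy : x = fun i => y (i + c) := by
      funext i
      simp only [hy, fin_add_sub_cancel]
    have hyS : y ∈ simplexD K := by
      refine ⟨fun i => hxS.1 _, ?_⟩
      have := Equiv.sum_comp (finShiftEquiv c).symm x
      simp only [finShiftEquiv, Equiv.coe_fn_symm_mk] at this
      rw [← hxS.2]
      exact this
    have hyball : y ∈ Metric.ball v ε := by
      rw [Metric.mem_ball, dist_pi_lt_iff hε]
      intro i
      have h1 : y i = x (i - c) := rfl
      have h2 : v i = (fun j => v (j + c)) (i - c) := by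
        simp only
        rw [fin_sub_add_cancel]
      rw [h1, h2]
      exact lt_of_le_of_lt (dist_le_pi_dist x (fun j => v (j + c)) (i - c))
        (Metric.mem_ball.mp hxball)
    have hfy := H ⟨hyball, hyS⟩
    simp only [Set.mem_setOf_eq] at hfy ⊢
    calc fHerman K x = fHerman K (fun i => y (i + c)) := by rw [← hxy]
      _ = fHerman K y := fHerman_shift hK hKodd y c
      _ ≤ fHerman K v := hfy
      _ = fHerman K (fun i => v (i + c)) := (fHerman_shift hK hKodd v c).symm
  exact goal

lemma IsInteriorLocalMax_shift (hK : 5 ≤ K) (hKodd : Odd K) (v : Fin K → ℝ)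
    (hv : IsInteriorLocalMax K v) (c : Fin K) :
    IsInteriorLocalMax K (fun i => v (i + c)) :=
  ⟨simplexD_shift hK c v hv.1, fun i => hv.2.1 _, isLocalMax_shift hK hKodd v hv.2.2 c⟩

/-! ### Polynomial expansion lemmas -/

lemma expand5 (v0 v1 v2 v3 v4 w0 w1 w2 w3 w4 s : ℝ)
    (h012 : w0*w1*w2 = 0) (h013 : w0*w1*w3 = 0) (h014 : w0*w1*w4 = 0)
    (h023 : w0*w2*w3 = 0) (h024 : w0*w2*w4 = 0) (h034 : w0*w3*w4 = 0)
    (h123 : w1*w2*w3 = 0) (h124 : w1*w2*w4 = 0) (h134 : w1*w3*w4 = 0)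
    (h234 : w2*w3*w4 = 0) :
    (v0+s*w0)*(v1+s*w1)*(v2+s*w2)*(v3+s*w3)*(v4+s*w4)
    = v0*v1*v2*v3*v4
    + s*(w0*v1*v2*v3*v4 + v0*w1*v2*v3*v4 + v0*v1*w2*v3*v4 + v0*v1*v2*w3*v4 + v0*v1*v2*v3*w4)
    + s^2*(w0*w1*v2*v3*v4 + w0*v1*w2*v3*v4 + w0*v1*v2*w3*v4 + w0*v1*v2*v3*w4
        + v0*w1*w2*v3*v4 + v0*w1*v2*w3*v4 + v0*w1*v2*v3*w4
        + v0*v1*w2*w3*v4 + v0*v1*w2*v3*w4 + v0*v1*v2*w3*w4) := by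
  linear_combination (s^3*v3*v4 + s^4*(w3*v4+v3*w4) + s^5*(w3*w4))*h012
    + (s^3*v2*v4 + s^4*v2*w4)*h013 + (s^3*v2*v3)*h014
    + (s^3*v1*v4 + s^4*v1*w4)*h023 + (s^3*v1*v3)*h024 + (s^3*v1*v2)*h034
    + (s^3*v0*v4 + s^4*v0*w4)*h123 + (s^3*v0*v3)*h124 + (s^3*v0*v2)*h134
    + (s^3*v0*v1)*h234

lemma expand3 (v0 v1 v2 w0 w1 w2 s : ℝ) (h : w0*w1*w2 = 0) :
    (v0+s*w0)*(v1+s*w1)*(v2+s*w2)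
    = v0*v1*v2 + s*(w0*v1*v2 + v0*w1*v2 + v0*v1*w2)
    + s^2*(w0*w1*v2 + w0*v1*w2 + v0*w1*w2) := by
  linear_combination (s^3)*h

/-! ### The perturbation direction -/

end Aux

/-- The direction `e_0 - e_2`. -/
def wK (K : ℕ) : Fin K → ℝ :=
  fun i => (if (i : ℕ) = 0 then (1:ℝ) else 0) - (if (i : ℕ) = 2 then (1:ℝ) else 0)

section W

variable {K : ℕ}

lemma wK_abs (i : Fin K) : |wK K i| ≤ 1 := by
  unfold wK
  split_ifs <;> norm_num

lemma wK_key (i : Fin K) (h : wK K i ≠ 0) : (i : ℕ) = 0 ∨ (i : ℕ) = 2 := by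
  by_contra hcon
  push_neg at hcon
  unfold wK at h
  rw [if_neg hcon.1, if_neg hcon.2, sub_zero] at h
  exact h rfl

lemma wK_val0 (i : Fin K) (h : (i : ℕ) = 0) : wK K i = 1 := by
  unfold wK
  rw [if_pos h, if_neg (by omega), sub_zero]

lemma wK_val2 (i : Fin K) (h : (i : ℕ) = 2) : wK K i = -1 := by
  unfold wK
  rw [if_pos h, if_neg (by omega), zero_sub]

lemma wK_zero (i : Fin K) (h0 : (i : ℕ) ≠ 0) (h2 : (i : ℕ) ≠ 2) : wK K i = 0 := by
  unfold wK
  rw [if_neg h0, if_neg h2, sub_zero]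

lemma wK_triple (i j l : Fin K) (hij : i ≠ j) (hil : i ≠ l) (hjl : j ≠ l) :
    wK K i * wK K j * wK K l = 0 := by
  by_cases hi : wK K i = 0
  · rw [hi]; ring
  by_cases hj : wK K j = 0
  · rw [hj]; ring
  by_cases hl : wK K l = 0
  · rw [hl]; ring
  exfalso
  have hij' : (i : ℕ) ≠ (j : ℕ) := fun h => hij (Fin.ext h)
  have hil' : (i : ℕ) ≠ (l : ℕ) := fun h => hil (Fin.ext h)
  have hjl' : (j : ℕ) ≠ (l : ℕ) := fun h => hjl (Fin.ext h)
  rcases wK_key i hi with h1 | h1 <;> rcases wK_key j hj with h2 | h2 <;>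
    rcases wK_key l hl with h3 | h3 <;> omega

lemma wK_pair (i j : Fin K) (hij : i ≠ j) : wK K i * wK K j ≤ 0 := by
  by_cases hi : wK K i = 0
  · rw [hi]; norm_num
  by_cases hj : wK K j = 0
  · rw [hj]; norm_num
  have hij' : (i : ℕ) ≠ (j : ℕ) := fun h => hij (Fin.ext h)
  rcases wK_key i hi with h1 | h1 <;> rcases wK_key j hj with h2 | h2
  · omega
  · rw [wK_val0 i h1, wK_val2 j h2]; norm_num
  · rw [wK_val2 i h1, wK_val0 j h2]; norm_num
  · omega

lemma wK_sum (hK : 5 ≤ K) : ∑ i, wK K i = 0 := by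
  haveI : NeZero K := ⟨by omega⟩
  unfold wK
  rw [Finset.sum_sub_distrib]
  have e0 : ∀ i : Fin K, ((i : ℕ) = 0) = (i = ⟨0, by omega⟩) := by
    intro i; exact (propext (Fin.ext_iff (a := i) (b := ⟨0, by omega⟩))).symm
  have e2 : ∀ i : Fin K, ((i : ℕ) = 2) = (i = ⟨2, by omega⟩) := by
    intro i; simp [Fin.ext_iff]
  simp only [e0, e2]
  rw [Finset.sum_ite_eq' Finset.univ (⟨0, by omega⟩ : Fin K) (fun _ => (1:ℝ)),
    Finset.sum_ite_eq' Finset.univ (⟨2, by omega⟩ : Fin K) (fun _ => (1:ℝ))]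
  simp

end W

/-! ### Expansion of `f3` and `f5` along a direction -/

section Identities

variable {K : ℕ}

lemma identity3 (v w : Fin K → ℝ)
    (hwt : ∀ i j l : Fin K, i ≠ j → i ≠ l → j ≠ l → w i * w j * w l = 0) (s : ℝ) :
    f3 K (v + s • w) = f3 K v
      + s * (∑ t ∈ Finset.univ.filter
          (fun t : Fin K × Fin K × Fin K =>
            t.1 < t.2.1 ∧ t.2.1 < t.2.2 ∧
            Odd (t.2.1.val - t.1.val) ∧ Odd (t.2.2.val - t.2.1.val)),
          (w t.1 * v t.2.1 * v t.2.2 + v t.1 * w t.2.1 * v t.2.2 + v t.1 * v t.2.1 * w t.2.2))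
      + s ^ 2 * (∑ t ∈ Finset.univ.filter
          (fun t : Fin K × Fin K × Fin K =>
            t.1 < t.2.1 ∧ t.2.1 < t.2.2 ∧
            Odd (t.2.1.val - t.1.val) ∧ Odd (t.2.2.val - t.2.1.val)),
          (w t.1 * w t.2.1 * v t.2.2 + w t.1 * v t.2.1 * w t.2.2 + v t.1 * w t.2.1 * w t.2.2)) := by
  unfold f3
  have step : ∀ t ∈ Finset.univ.filter
      (fun t : Fin K × Fin K × Fin K =>
        t.1 < t.2.1 ∧ t.2.1 < t.2.2 ∧
        Odd (t.2.1.val - t.1.val) ∧ Odd (t.2.2.val - t.2.1.val)),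
      (v + s • w) t.1 * (v + s • w) t.2.1 * (v + s • w) t.2.2
      = v t.1 * v t.2.1 * v t.2.2
      + s * (w t.1 * v t.2.1 * v t.2.2 + v t.1 * w t.2.1 * v t.2.2 + v t.1 * v t.2.1 * w t.2.2)
      + s ^ 2 * (w t.1 * w t.2.1 * v t.2.2 + w t.1 * v t.2.1 * w t.2.2
          + v t.1 * w t.2.1 * w t.2.2) := by
    intro t ht
    simp only [Finset.mem_filter, Finset.mem_univ, true_and] at ht
    have hne01 : t.1 ≠ t.2.1 := ne_of_lt ht.1
    have hne02 : t.1 ≠ t.2.2 := ne_of_lt (lt_trans ht.1 ht.2.1)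
    have hne12 : t.2.1 ≠ t.2.2 := ne_of_lt ht.2.1
    simp only [Pi.add_apply, Pi.smul_apply, smul_eq_mul]
    exact expand3 _ _ _ _ _ _ s (hwt _ _ _ hne01 hne02 hne12)
  rw [Finset.sum_congr rfl step]
  rw [Finset.sum_add_distrib, Finset.sum_add_distrib, ← Finset.mul_sum, ← Finset.mul_sum]

lemma identity5 (v w : Fin K → ℝ)
    (hwt : ∀ i j l : Fin K, i ≠ j → i ≠ l → j ≠ l → w i * w j * w l = 0) (s : ℝ) :
    f5 K (v + s • w) = f5 K v
      + s * (∑ t ∈ Finset.univ.filter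
          (fun t : Fin K × Fin K × Fin K × Fin K × Fin K =>
            t.1 < t.2.1 ∧ t.2.1 < t.2.2.1 ∧ t.2.2.1 < t.2.2.2.1 ∧ t.2.2.2.1 < t.2.2.2.2 ∧
            Odd (t.2.1.val - t.1.val) ∧ Odd (t.2.2.1.val - t.2.1.val) ∧
            Odd (t.2.2.2.1.val - t.2.2.1.val) ∧ Odd (t.2.2.2.2.val - t.2.2.2.1.val)),
          (w t.1 * v t.2.1 * v t.2.2.1 * v t.2.2.2.1 * v t.2.2.2.2
            + v t.1 * w t.2.1 * v t.2.2.1 * v t.2.2.2.1 * v t.2.2.2.2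
            + v t.1 * v t.2.1 * w t.2.2.1 * v t.2.2.2.1 * v t.2.2.2.2
            + v t.1 * v t.2.1 * v t.2.2.1 * w t.2.2.2.1 * v t.2.2.2.2
            + v t.1 * v t.2.1 * v t.2.2.1 * v t.2.2.2.1 * w t.2.2.2.2))
      + s ^ 2 * (∑ t ∈ Finset.univ.filter
          (fun t : Fin K × Fin K × Fin K × Fin K × Fin K =>
            t.1 < t.2.1 ∧ t.2.1 < t.2.2.1 ∧ t.2.2.1 < t.2.2.2.1 ∧ t.2.2.2.1 < t.2.2.2.2 ∧
            Odd (t.2.1.val - t.1.val) ∧ Odd (t.2.2.1.val - t.2.1.val) ∧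
            Odd (t.2.2.2.1.val - t.2.2.1.val) ∧ Odd (t.2.2.2.2.val - t.2.2.2.1.val)),
          (w t.1 * w t.2.1 * v t.2.2.1 * v t.2.2.2.1 * v t.2.2.2.2
            + w t.1 * v t.2.1 * w t.2.2.1 * v t.2.2.2.1 * v t.2.2.2.2
            + w t.1 * v t.2.1 * v t.2.2.1 * w t.2.2.2.1 * v t.2.2.2.2
            + w t.1 * v t.2.1 * v t.2.2.1 * v t.2.2.2.1 * w t.2.2.2.2
            + v t.1 * w t.2.1 * w t.2.2.1 * v t.2.2.2.1 * v t.2.2.2.2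
            + v t.1 * w t.2.1 * v t.2.2.1 * w t.2.2.2.1 * v t.2.2.2.2
            + v t.1 * w t.2.1 * v t.2.2.1 * v t.2.2.2.1 * w t.2.2.2.2
            + v t.1 * v t.2.1 * w t.2.2.1 * w t.2.2.2.1 * v t.2.2.2.2
            + v t.1 * v t.2.1 * w t.2.2.1 * v t.2.2.2.1 * w t.2.2.2.2
            + v t.1 * v t.2.1 * v t.2.2.1 * w t.2.2.2.1 * w t.2.2.2.2)) := by
  unfold f5
  have step : ∀ t ∈ Finset.univ.filter
      (fun t : Fin K × Fin K × Fin K × Fin K × Fin K =>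
        t.1 < t.2.1 ∧ t.2.1 < t.2.2.1 ∧ t.2.2.1 < t.2.2.2.1 ∧ t.2.2.2.1 < t.2.2.2.2 ∧
        Odd (t.2.1.val - t.1.val) ∧ Odd (t.2.2.1.val - t.2.1.val) ∧
        Odd (t.2.2.2.1.val - t.2.2.1.val) ∧ Odd (t.2.2.2.2.val - t.2.2.2.1.val)),
      (v + s • w) t.1 * (v + s • w) t.2.1 * (v + s • w) t.2.2.1
        * (v + s • w) t.2.2.2.1 * (v + s • w) t.2.2.2.2
      = v t.1 * v t.2.1 * v t.2.2.1 * v t.2.2.2.1 * v t.2.2.2.2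
      + s * (w t.1 * v t.2.1 * v t.2.2.1 * v t.2.2.2.1 * v t.2.2.2.2
        + v t.1 * w t.2.1 * v t.2.2.1 * v t.2.2.2.1 * v t.2.2.2.2
        + v t.1 * v t.2.1 * w t.2.2.1 * v t.2.2.2.1 * v t.2.2.2.2
        + v t.1 * v t.2.1 * v t.2.2.1 * w t.2.2.2.1 * v t.2.2.2.2
        + v t.1 * v t.2.1 * v t.2.2.1 * v t.2.2.2.1 * w t.2.2.2.2)
      + s ^ 2 * (w t.1 * w t.2.1 * v t.2.2.1 * v t.2.2.2.1 * v t.2.2.2.2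
        + w t.1 * v t.2.1 * w t.2.2.1 * v t.2.2.2.1 * v t.2.2.2.2
        + w t.1 * v t.2.1 * v t.2.2.1 * w t.2.2.2.1 * v t.2.2.2.2
        + w t.1 * v t.2.1 * v t.2.2.1 * v t.2.2.2.1 * w t.2.2.2.2
        + v t.1 * w t.2.1 * w t.2.2.1 * v t.2.2.2.1 * v t.2.2.2.2
        + v t.1 * w t.2.1 * v t.2.2.1 * w t.2.2.2.1 * v t.2.2.2.2
        + v t.1 * w t.2.1 * v t.2.2.1 * v t.2.2.2.1 * w t.2.2.2.2
        + v t.1 * v t.2.1 * w t.2.2.1 * w t.2.2.2.1 * v t.2.2.2.2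
        + v t.1 * v t.2.1 * w t.2.2.1 * v t.2.2.2.1 * w t.2.2.2.2
        + v t.1 * v t.2.1 * v t.2.2.1 * w t.2.2.2.1 * w t.2.2.2.2) := by
    intro t ht
    simp only [Finset.mem_filter, Finset.mem_univ, true_and] at ht
    obtain ⟨l01, l12, l23, l34, -⟩ := ht
    have l02 := lt_trans l01 l12
    have l03 := lt_trans l02 l23
    have l04 := lt_trans l03 l34
    have l13 := lt_trans l12 l23
    have l14 := lt_trans l13 l34
    have l24 := lt_trans l23 l34
    simp only [Pi.add_apply, Pi.smul_apply, smul_eq_mul]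
    exact expand5 _ _ _ _ _ _ _ _ _ _ s
      (hwt _ _ _ (ne_of_lt l01) (ne_of_lt l02) (ne_of_lt l12))
      (hwt _ _ _ (ne_of_lt l01) (ne_of_lt l03) (ne_of_lt l13))
      (hwt _ _ _ (ne_of_lt l01) (ne_of_lt l04) (ne_of_lt l14))
      (hwt _ _ _ (ne_of_lt l02) (ne_of_lt l03) (ne_of_lt l23))
      (hwt _ _ _ (ne_of_lt l02) (ne_of_lt l04) (ne_of_lt l24))
      (hwt _ _ _ (ne_of_lt l03) (ne_of_lt l04) (ne_of_lt l34))
      (hwt _ _ _ (ne_of_lt l12) (ne_of_lt l13) (ne_of_lt l23))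
      (hwt _ _ _ (ne_of_lt l12) (ne_of_lt l14) (ne_of_lt l24))
      (hwt _ _ _ (ne_of_lt l13) (ne_of_lt l14) (ne_of_lt l34))
      (hwt _ _ _ (ne_of_lt l23) (ne_of_lt l24) (ne_of_lt l34))
  rw [Finset.sum_congr rfl step]
  rw [Finset.sum_add_distrib, Finset.sum_add_distrib, ← Finset.mul_sum, ← Finset.mul_sum]

end Identities

/-! ### Evaluation of the quadratic coefficients -/

section Eval

variable {K : ℕ}

lemma A2_eval (hK : 5 ≤ K) (hK2 : K % 2 = 1) (v : Fin K → ℝ) :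
    (∑ t ∈ Finset.univ.filter
        (fun t : Fin K × Fin K × Fin K =>
          t.1 < t.2.1 ∧ t.2.1 < t.2.2 ∧
          Odd (t.2.1.val - t.1.val) ∧ Odd (t.2.2.val - t.2.1.val)),
      (wK K t.1 * wK K t.2.1 * v t.2.2 + wK K t.1 * v t.2.1 * wK K t.2.2
        + v t.1 * wK K t.2.1 * wK K t.2.2))
    = - v ⟨1, by omega⟩ := by
  have hmem : ((⟨0, by omega⟩, ⟨1, by omega⟩, ⟨2, by omega⟩) : Fin K × Fin K × Fin K)
      ∈ Finset.univ.filter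
        (fun t : Fin K × Fin K × Fin K =>
          t.1 < t.2.1 ∧ t.2.1 < t.2.2 ∧
          Odd (t.2.1.val - t.1.val) ∧ Odd (t.2.2.val - t.2.1.val)) := by
    simp only [Finset.mem_filter, Finset.mem_univ, true_and, Fin.mk_lt_mk, Fin.lt_def,
      Fin.val_mk, Nat.odd_iff]
    norm_num
  rw [Finset.sum_eq_single_of_mem _ hmem]
  · dsimp only
    rw [wK_val0 (⟨0, by omega⟩ : Fin K) rfl, wK_val2 (⟨2, by omega⟩ : Fin K) rfl,
      wK_zero (⟨1, by omega⟩ : Fin K) (by simp) (by simp)]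
    ring
  · rintro ⟨u0, u1, u2⟩ ht hne
    simp only [Finset.mem_filter, Finset.mem_univ, true_and, Fin.lt_def, Nat.odd_iff] at ht
    obtain ⟨l01, l12, o01, o12⟩ := ht
    -- pairwise products vanish
    have p01 : wK K u0 * wK K u1 = 0 := by
      by_contra hne'
      have h0 : wK K u0 ≠ 0 := fun h => hne' (by rw [h]; ring)
      have h1 : wK K u1 ≠ 0 := fun h => hne' (by rw [h]; ring)
      rcases wK_key u0 h0 with e | e <;> rcases wK_key u1 h1 with f | f <;> omega
    have p12 : wK K u1 * wK K u2 = 0 := by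
      by_contra hne'
      have h1 : wK K u1 ≠ 0 := fun h => hne' (by rw [h]; ring)
      have h2 : wK K u2 ≠ 0 := fun h => hne' (by rw [h]; ring)
      rcases wK_key u1 h1 with e | e <;> rcases wK_key u2 h2 with f | f <;> omega
    have p02 : wK K u0 * wK K u2 = 0 := by
      by_contra hne'
      have h0 : wK K u0 ≠ 0 := fun h => hne' (by rw [h]; ring)
      have h2 : wK K u2 ≠ 0 := fun h => hne' (by rw [h]; ring)
      have e : (u0 : ℕ) = 0 := by
        rcases wK_key u0 h0 with e | e <;> rcases wK_key u2 h2 with f | f <;> omega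
      have f : (u2 : ℕ) = 2 := by
        rcases wK_key u0 h0 with e' | e' <;> rcases wK_key u2 h2 with f | f <;> omega
      have g : (u1 : ℕ) = 1 := by omega
      apply hne
      simp only [Prod.mk.injEq]
      exact ⟨Fin.ext e, Fin.ext g, Fin.ext f⟩
    calc wK K u0 * wK K u1 * v u2 + wK K u0 * v u1 * wK K u2 + v u0 * wK K u1 * wK K u2
        = (wK K u0 * wK K u1) * v u2 + (wK K u0 * wK K u2) * v u1
          + (wK K u1 * wK K u2) * v u0 := by ring
      _ = 0 := by rw [p01, p12, p02]; ring

lemma mul_np {x y : ℝ} (hx : x ≤ 0) (hy : 0 ≤ y) : x * y ≤ 0 := by nlinarith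

lemma B2_bound (hK : 5 ≤ K) (hK2 : K % 2 = 1) (v : Fin K → ℝ) (hpos : ∀ i, 0 < v i) :
    (∑ t ∈ Finset.univ.filter
        (fun t : Fin K × Fin K × Fin K × Fin K × Fin K =>
          t.1 < t.2.1 ∧ t.2.1 < t.2.2.1 ∧ t.2.2.1 < t.2.2.2.1 ∧ t.2.2.2.1 < t.2.2.2.2 ∧
          Odd (t.2.1.val - t.1.val) ∧ Odd (t.2.2.1.val - t.2.1.val) ∧
          Odd (t.2.2.2.1.val - t.2.2.1.val) ∧ Odd (t.2.2.2.2.val - t.2.2.2.1.val)),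
      (wK K t.1 * wK K t.2.1 * v t.2.2.1 * v t.2.2.2.1 * v t.2.2.2.2
        + wK K t.1 * v t.2.1 * wK K t.2.2.1 * v t.2.2.2.1 * v t.2.2.2.2
        + wK K t.1 * v t.2.1 * v t.2.2.1 * wK K t.2.2.2.1 * v t.2.2.2.2
        + wK K t.1 * v t.2.1 * v t.2.2.1 * v t.2.2.2.1 * wK K t.2.2.2.2
        + v t.1 * wK K t.2.1 * wK K t.2.2.1 * v t.2.2.2.1 * v t.2.2.2.2
        + v t.1 * wK K t.2.1 * v t.2.2.1 * wK K t.2.2.2.1 * v t.2.2.2.2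
        + v t.1 * wK K t.2.1 * v t.2.2.1 * v t.2.2.2.1 * wK K t.2.2.2.2
        + v t.1 * v t.2.1 * wK K t.2.2.1 * wK K t.2.2.2.1 * v t.2.2.2.2
        + v t.1 * v t.2.1 * wK K t.2.2.1 * v t.2.2.2.1 * wK K t.2.2.2.2
        + v t.1 * v t.2.1 * v t.2.2.1 * wK K t.2.2.2.1 * wK K t.2.2.2.2))
    ≤ - v ⟨1, by omega⟩ * ∑ p ∈ Finset.univ.filter
        (fun p : Fin K × Fin K =>
          3 ≤ p.1.val ∧ p.1.val < p.2.val ∧ Odd p.1.val ∧ Even p.2.val),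
      v p.1 * v p.2 := by
  classical
  set F5 := Finset.univ.filter
      (fun t : Fin K × Fin K × Fin K × Fin K × Fin K =>
        t.1 < t.2.1 ∧ t.2.1 < t.2.2.1 ∧ t.2.2.1 < t.2.2.2.1 ∧ t.2.2.2.1 < t.2.2.2.2 ∧
        Odd (t.2.1.val - t.1.val) ∧ Odd (t.2.2.1.val - t.2.1.val) ∧
        Odd (t.2.2.2.1.val - t.2.2.1.val) ∧ Odd (t.2.2.2.2.val - t.2.2.2.1.val)) with hF5
  set P := Finset.univ.filter
      (fun p : Fin K × Fin K =>
        3 ≤ p.1.val ∧ p.1.val < p.2.val ∧ Odd p.1.val ∧ Even p.2.val) with hP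
  set g : Fin K × Fin K × Fin K × Fin K × Fin K → ℝ := fun t =>
      wK K t.1 * wK K t.2.1 * v t.2.2.1 * v t.2.2.2.1 * v t.2.2.2.2
        + wK K t.1 * v t.2.1 * wK K t.2.2.1 * v t.2.2.2.1 * v t.2.2.2.2
        + wK K t.1 * v t.2.1 * v t.2.2.1 * wK K t.2.2.2.1 * v t.2.2.2.2
        + wK K t.1 * v t.2.1 * v t.2.2.1 * v t.2.2.2.1 * wK K t.2.2.2.2
        + v t.1 * wK K t.2.1 * wK K t.2.2.1 * v t.2.2.2.1 * v t.2.2.2.2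
        + v t.1 * wK K t.2.1 * v t.2.2.1 * wK K t.2.2.2.1 * v t.2.2.2.2
        + v t.1 * wK K t.2.1 * v t.2.2.1 * v t.2.2.2.1 * wK K t.2.2.2.2
        + v t.1 * v t.2.1 * wK K t.2.2.1 * wK K t.2.2.2.1 * v t.2.2.2.2
        + v t.1 * v t.2.1 * wK K t.2.2.1 * v t.2.2.2.1 * wK K t.2.2.2.2
        + v t.1 * v t.2.1 * v t.2.2.1 * wK K t.2.2.2.1 * wK K t.2.2.2.2 with hg
  set Tmap : Fin K × Fin K → Fin K × Fin K × Fin K × Fin K × Fin K :=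
    fun p => (⟨0, by omega⟩, ⟨1, by omega⟩, ⟨2, by omega⟩, p.1, p.2) with hT
  -- each summand is nonpositive
  have hnonpos : ∀ t ∈ F5, g t ≤ 0 := by
    rintro ⟨u0, u1, u2, u3, u4⟩ ht
    simp only [hF5, Finset.mem_filter, Finset.mem_univ, true_and] at ht
    obtain ⟨l01, l12, l23, l34, -⟩ := ht
    have l02 := lt_trans l01 l12
    have l03 := lt_trans l02 l23
    have l04 := lt_trans l03 l34
    have l13 := lt_trans l12 l23
    have l14 := lt_trans l13 l34
    have l24 := lt_trans l23 l34
    have q2 : (0:ℝ) ≤ v u2 := le_of_lt (hpos u2)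
    have q0 : (0:ℝ) ≤ v u0 := le_of_lt (hpos u0)
    have q1 : (0:ℝ) ≤ v u1 := le_of_lt (hpos u1)
    have q3 : (0:ℝ) ≤ v u3 := le_of_lt (hpos u3)
    have q4 : (0:ℝ) ≤ v u4 := le_of_lt (hpos u4)
    have g1 := mul_np (wK_pair u0 u1 (ne_of_lt l01)) (mul_nonneg (mul_nonneg q2 q3) q4)
    have g2 := mul_np (wK_pair u0 u2 (ne_of_lt l02)) (mul_nonneg (mul_nonneg q1 q3) q4)
    have g3 := mul_np (wK_pair u0 u3 (ne_of_lt l03)) (mul_nonneg (mul_nonneg q1 q2) q4)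
    have g4 := mul_np (wK_pair u0 u4 (ne_of_lt l04)) (mul_nonneg (mul_nonneg q1 q2) q3)
    have g5 := mul_np (wK_pair u1 u2 (ne_of_lt l12)) (mul_nonneg (mul_nonneg q0 q3) q4)
    have g6 := mul_np (wK_pair u1 u3 (ne_of_lt l13)) (mul_nonneg (mul_nonneg q0 q2) q4)
    have g7 := mul_np (wK_pair u1 u4 (ne_of_lt l14)) (mul_nonneg (mul_nonneg q0 q2) q3)
    have g8 := mul_np (wK_pair u2 u3 (ne_of_lt l23)) (mul_nonneg (mul_nonneg q0 q1) q4)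
    have g9 := mul_np (wK_pair u2 u4 (ne_of_lt l24)) (mul_nonneg (mul_nonneg q0 q1) q3)
    have g10 := mul_np (wK_pair u3 u4 (ne_of_lt l34)) (mul_nonneg (mul_nonneg q0 q1) q2)
    simp only [hg]
    nlinarith [g1, g2, g3, g4, g5, g6, g7, g8, g9, g10]
  -- the image of P lies in F5
  have hsub : P.image Tmap ⊆ F5 := by
    intro t ht
    obtain ⟨p, hp, rfl⟩ := Finset.mem_image.mp ht
    simp only [hP, Finset.mem_filter, Finset.mem_univ, true_and, Nat.odd_iff,
      Nat.even_iff] at hp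
    simp only [hF5, hT, Finset.mem_filter, Finset.mem_univ, true_and, Fin.lt_def,
      Nat.odd_iff]
    omega
  -- split the sum
  have hsplit : ∑ t ∈ F5, g t = (∑ t ∈ F5 \ P.image Tmap, g t) + ∑ t ∈ P.image Tmap, g t :=
    (Finset.sum_sdiff hsub).symm
  have hdiff : (∑ t ∈ F5 \ P.image Tmap, g t) ≤ 0 :=
    Finset.sum_nonpos (fun t ht => hnonpos t (Finset.mem_sdiff.mp ht).1)
  have hinj : ∀ p ∈ P, ∀ q ∈ P, Tmap p = Tmap q → p = q := by
    intro p hp q hq h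
    simp only [hT, Prod.mk.injEq] at h
    exact Prod.ext h.2.2.2.1 h.2.2.2.2
  have himage : ∑ t ∈ P.image Tmap, g t = ∑ p ∈ P, g (Tmap p) := Finset.sum_image hinj
  have hval : ∀ p ∈ P, g (Tmap p) = - v ⟨1, by omega⟩ * (v p.1 * v p.2) := by
    rintro ⟨p1, p2⟩ hp
    simp only [hP, Finset.mem_filter, Finset.mem_univ, true_and] at hp
    obtain ⟨h3, hlt, -, -⟩ := hp
    have w0 : wK K (⟨0, by omega⟩ : Fin K) = 1 := wK_val0 _ rfl
    have w1 : wK K (⟨1, by omega⟩ : Fin K) = 0 := wK_zero _ (by simp) (by simp)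
    have w2 : wK K (⟨2, by omega⟩ : Fin K) = -1 := wK_val2 _ rfl
    have wp1 : wK K p1 = 0 := wK_zero _ (by omega) (by omega)
    have wp2 : wK K p2 = 0 := wK_zero _ (by omega) (by omega)
    simp only [hg, hT]
    rw [w0, w1, w2, wp1, wp2]
    ring
  have hsum2 : ∑ p ∈ P, g (Tmap p) = - v ⟨1, by omega⟩ * ∑ p ∈ P, v p.1 * v p.2 := by
    rw [Finset.mul_sum]
    exact Finset.sum_congr rfl (fun p hp => by rw [hval p hp])
  calc ∑ t ∈ F5, g t = (∑ t ∈ F5 \ P.image Tmap, g t) + ∑ t ∈ P.image Tmap, g t := hsplit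
    _ ≤ ∑ t ∈ P.image Tmap, g t := by linarith
    _ = ∑ p ∈ P, g (Tmap p) := himage
    _ = - v ⟨1, by omega⟩ * ∑ p ∈ P, v p.1 * v p.2 := hsum2

end Eval

/-! ### The core bound (case `k = 0`) -/

set_option maxHeartbeats 1000000 in
lemma core_bound (K : ℕ) (hK : 5 ≤ K) (hKodd : Odd K)
    (v : Fin K → ℝ) (hv : IsInteriorLocalMax K v) :
    ∑ p ∈ Finset.univ.filter
        (fun p : Fin K × Fin K =>
          3 ≤ p.1.val ∧ p.1.val < p.2.val ∧ Odd p.1.val ∧ Even p.2.val),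
      v p.1 * v p.2 ≤ 1 / 24 := by
  haveI : NeZero K := ⟨by omega⟩
  have hK2 : K % 2 = 1 := Nat.odd_iff.mp hKodd
  obtain ⟨hsimp, hpos, hmax⟩ := hv
  -- minimum coordinate
  obtain ⟨i0, -, hi0⟩ := Finset.exists_min_image Finset.univ v
    ⟨(⟨0, by omega⟩ : Fin K), Finset.mem_univ _⟩
  have hm : 0 < v i0 := hpos i0
  have hml : ∀ i, v i0 ≤ v i := fun i => hi0 i (Finset.mem_univ i)
  have habs : ∀ (s : ℝ) (i : Fin K), |s * wK K i| ≤ |s| := by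
    intro s i
    rw [abs_mul]
    calc |s| * |wK K i| ≤ |s| * 1 := mul_le_mul_of_nonneg_left (wK_abs i) (abs_nonneg s)
      _ = |s| := mul_one _
  -- perturbations stay in the simplex
  have hmem : ∀ s : ℝ, |s| ≤ v i0 → v + s • wK K ∈ simplexD K := by
    intro s hs
    have hnn : ∀ i, 0 ≤ (v + s • wK K) i := by
      intro i
      simp only [Pi.add_apply, Pi.smul_apply, smul_eq_mul]
      have h1 := neg_abs_le (s * wK K i)
      have h2 := habs s i
      have h3 := hml i
      linarith
    have hsum : ∑ i, (v + s • wK K) i = 1 := by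
      simp only [Pi.add_apply, Pi.smul_apply, smul_eq_mul]
      rw [Finset.sum_add_distrib, ← Finset.mul_sum, wK_sum hK, hsimp.2]
      ring
    refine ⟨fun i => ⟨hnn i, ?_⟩, hsum⟩
    calc (v + s • wK K) i ≤ ∑ j, (v + s • wK K) j :=
        Finset.single_le_sum (fun j _ => hnn j) (Finset.mem_univ i)
      _ = 1 := hsum
  -- local maximality gives a ball
  have hmax' : {x | fHerman K x ≤ fHerman K v} ∈ nhdsWithin v (simplexD K) := hmax
  obtain ⟨ε, hε, H⟩ := Metric.mem_nhdsWithin_iff.mp hmax'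
  set δ : ℝ := min (ε / 2) (v i0) with hδdef
  have hδ : 0 < δ := lt_min (by linarith) hm
  have hle : ∀ s : ℝ, |s| ≤ δ → fHerman K (v + s • wK K) ≤ fHerman K v := by
    intro s hs
    have h1 : v + s • wK K ∈ simplexD K := hmem s (le_trans hs (min_le_right _ _))
    have h2 : v + s • wK K ∈ Metric.ball v ε := by
      rw [Metric.mem_ball, dist_pi_lt_iff hε]
      intro i
      have hd : dist ((v + s • wK K) i) (v i) = |s * wK K i| := by
        rw [Real.dist_eq]
        congr 1
        simp only [Pi.add_apply, Pi.smul_apply, smul_eq_mul]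
        ring
      rw [hd]
      calc |s * wK K i| ≤ |s| := habs s i
        _ ≤ δ := hs
        _ ≤ ε / 2 := min_le_left _ _
        _ < ε := by linarith
    exact H ⟨h2, h1⟩
  -- second-order inequality
  have e1 := hle δ (by rw [abs_of_pos hδ])
  have e2 := hle (-δ) (by rw [abs_neg, abs_of_pos hδ])
  have hwt := fun i j l hij hil hjl => wK_triple (K := K) i j l hij hil hjl
  unfold fHerman at e1 e2
  rw [identity3 v (wK K) hwt δ, identity5 v (wK K) hwt δ] at e1
  rw [identity3 v (wK K) hwt (-δ), identity5 v (wK K) hwt (-δ)] at e2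
  rw [A2_eval hK hK2 v] at e1 e2
  have hB := B2_bound hK hK2 v hpos
  set B2s := ∑ t ∈ Finset.univ.filter
      (fun t : Fin K × Fin K × Fin K × Fin K × Fin K =>
        t.1 < t.2.1 ∧ t.2.1 < t.2.2.1 ∧ t.2.2.1 < t.2.2.2.1 ∧ t.2.2.2.1 < t.2.2.2.2 ∧
        Odd (t.2.1.val - t.1.val) ∧ Odd (t.2.2.1.val - t.2.1.val) ∧
        Odd (t.2.2.2.1.val - t.2.2.1.val) ∧ Odd (t.2.2.2.2.val - t.2.2.2.1.val)),
    (wK K t.1 * wK K t.2.1 * v t.2.2.1 * v t.2.2.2.1 * v t.2.2.2.2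
      + wK K t.1 * v t.2.1 * wK K t.2.2.1 * v t.2.2.2.1 * v t.2.2.2.2
      + wK K t.1 * v t.2.1 * v t.2.2.1 * wK K t.2.2.2.1 * v t.2.2.2.2
      + wK K t.1 * v t.2.1 * v t.2.2.1 * v t.2.2.2.1 * wK K t.2.2.2.2
      + v t.1 * wK K t.2.1 * wK K t.2.2.1 * v t.2.2.2.1 * v t.2.2.2.2
      + v t.1 * wK K t.2.1 * v t.2.2.1 * wK K t.2.2.2.1 * v t.2.2.2.2
      + v t.1 * wK K t.2.1 * v t.2.2.1 * v t.2.2.2.1 * wK K t.2.2.2.2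
      + v t.1 * v t.2.1 * wK K t.2.2.1 * wK K t.2.2.2.1 * v t.2.2.2.2
      + v t.1 * v t.2.1 * wK K t.2.2.1 * v t.2.2.2.1 * wK K t.2.2.2.2
      + v t.1 * v t.2.1 * v t.2.2.1 * wK K t.2.2.2.1 * wK K t.2.2.2.2) with hB2s
  have hv1 := hpos (⟨1, by omega⟩ : Fin K)
  have hcomb : δ ^ 2 * (- v ⟨1, by omega⟩ - 24 * B2s) ≤ 0 := by nlinarith [e1, e2]
  have hδ2 : 0 < δ ^ 2 := by positivity
  have hM : - v ⟨1, by omega⟩ - 24 * B2s ≤ 0 := by nlinarith [hcomb, hδ2]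
  nlinarith [hM, hB, hv1]

/-- **Second-derivative condition** (Lemma 10, second part): at an interior local
maximum `v` of `f^(K)` (`K ≥ 5` odd),
`Σ_{3≤i3<i4<K, i3 odd, i4 even} v_{i3} v_{i4} ≤ 1/24`, and the same inequality holds
when every index `i` is replaced by `(i+k) mod K`, for every `k`. -/
theorem second_derivative_bound (K : ℕ) (hK : 5 ≤ K) (hKodd : Odd K)
    (v : Fin K → ℝ) (hv : IsInteriorLocalMax K v) :
    ∀ k : Fin K,
      ∑ p ∈ Finset.univ.filter
          (fun p : Fin K × Fin K =>
            3 ≤ p.1.val ∧ p.1.val < p.2.val ∧ Odd p.1.val ∧ Even p.2.val),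
        v (p.1 + k) * v (p.2 + k) ≤ 1 / 24 := by
  intro k
  have hv' : IsInteriorLocalMax K (fun i => v (i + k)) :=
    IsInteriorLocalMax_shift hK hKodd v hv k
  exact core_bound K hK hKodd (fun i => v (i + k)) hv'
end

section
/- Let K ≥ 3 be odd and suppose v ∈ D^(K) satisfies f^(K)(v) > 1/27. Then 24·f5^(K)(v) < 1/216. -/
/-! ### Auxiliary development

We prove the key bound `f3 K v ≤ 1/24` for `v` in the simplex, via discrete
Abel summation identities.  The theorem then follows since
`24 * f5 = f3 - fHerman < 1/24 - 1/27 = 1/216`. -/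

namespace HermanAux

variable (p : ℕ → Prop) [DecidablePred p] (y : ℕ → ℝ)

/-- prefix sum of the `p`-class -/
def UU (n : ℕ) : ℝ := ∑ i ∈ Finset.range n, if p i then y i else 0
/-- prefix sum of the complementary class -/
def VV (n : ℕ) : ℝ := ∑ i ∈ Finset.range n, if p i then 0 else y i

lemma UU_succ (n : ℕ) : UU p y (n + 1) = UU p y n + if p n then y n else 0 :=
  Finset.sum_range_succ _ n

lemma VV_succ (n : ℕ) : VV p y (n + 1) = VV p y n + if p n then 0 else y n :=
  Finset.sum_range_succ _ n

lemma PQ (n : ℕ) :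
    (∑ j ∈ Finset.range n, if p j then y j * VV p y j else 0)
      + (∑ j ∈ Finset.range n, if p j then 0 else y j * UU p y j)
      = UU p y n * VV p y n := by
  induction n with
  | zero => simp [UU, VV]
  | succ n ih =>
    rw [Finset.sum_range_succ, Finset.sum_range_succ, UU_succ, VV_succ]
    by_cases h : p n
    · simp only [if_pos h]
      linear_combination ih
    · simp only [if_neg h]
      linear_combination ih

lemma abel (n : ℕ) :
    (∑ j ∈ Finset.range n, if p j then y j * VV p y j * (VV p y n - VV p y j) else 0)
      = ∑ j ∈ Finset.range n, if p j then 0 else y j * UU p y j * (2 * VV p y j + y j - VV p y n) := by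
  induction n with
  | zero => simp
  | succ n ih =>
    have hV := VV_succ p y n
    have e1 : (∑ j ∈ Finset.range n, if p j then y j * VV p y j * (VV p y (n + 1) - VV p y j) else 0)
        = (∑ j ∈ Finset.range n, if p j then y j * VV p y j * (VV p y n - VV p y j) else 0)
          + (if p n then 0 else y n) * ∑ j ∈ Finset.range n, if p j then y j * VV p y j else 0 := by
      rw [Finset.mul_sum, ← Finset.sum_add_distrib]
      refine Finset.sum_congr rfl fun j _ => ?_
      by_cases hj : p j
      · rw [if_pos hj, if_pos hj, if_pos hj, hV]; ring
      · simp [hj]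
    have e2 : (∑ j ∈ Finset.range n, if p j then 0 else y j * UU p y j * (2 * VV p y j + y j - VV p y (n + 1)))
        = (∑ j ∈ Finset.range n, if p j then 0 else y j * UU p y j * (2 * VV p y j + y j - VV p y n))
          - (if p n then 0 else y n) * ∑ j ∈ Finset.range n, if p j then 0 else y j * UU p y j := by
      rw [Finset.mul_sum, ← Finset.sum_sub_distrib]
      refine Finset.sum_congr rfl fun j _ => ?_
      by_cases hj : p j
      · simp [hj]
      · rw [if_neg hj, if_neg hj, if_neg hj, hV]; ring
    rw [Finset.sum_range_succ, Finset.sum_range_succ, e1, e2, ih]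
    by_cases h : p n
    · rw [hV]; simp only [if_pos h]; ring
    · rw [hV]; simp only [if_neg h]
      linear_combination y n * PQ p y n

lemma tele (c : ℝ) (n : ℕ) :
    (∑ j ∈ Finset.range n,
        if p j then 0 else ((2 * VV p y j + 2 * y j + c) ^ 3 - (2 * VV p y j + c) ^ 3))
      = (2 * VV p y n + c) ^ 3 - c ^ 3 := by
  induction n with
  | zero => simp [VV]
  | succ n ih =>
    rw [Finset.sum_range_succ, ih, VV_succ]
    by_cases h : p n
    · simp [h]
    · simp only [if_neg h]; ring

lemma bound (hy : ∀ i, 0 ≤ y i) (n : ℕ) :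
    (∑ j ∈ Finset.range n, if p j then y j * VV p y j * (VV p y n - VV p y j) else 0)
      + (∑ j ∈ Finset.range n, if p j then 0 else y j * UU p y j * (UU p y n - UU p y j))
      ≤ ((UU p y n + VV p y n) ^ 3 - (UU p y n - VV p y n) ^ 3) / 24 := by
  rw [abel, ← Finset.sum_add_distrib]
  have key : ∀ j ∈ Finset.range n,
      ((if p j then 0 else y j * UU p y j * (2 * VV p y j + y j - VV p y n))
        + (if p j then 0 else y j * UU p y j * (UU p y n - UU p y j)))
      ≤ (if p j then 0 else ((2 * VV p y j + 2 * y j + (UU p y n - VV p y n)) ^ 3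
            - (2 * VV p y j + (UU p y n - VV p y n)) ^ 3)) / 24 := by
    intro j _
    by_cases hj : p j
    · simp [hj]
    · simp only [if_neg hj]
      nlinarith [mul_nonneg (hy j)
          (sq_nonneg (2 * VV p y j + y j + UU p y n - VV p y n - 2 * UU p y j)),
        mul_nonneg (mul_nonneg (hy j) (hy j)) (hy j)]
  calc _ ≤ ∑ j ∈ Finset.range n,
        (if p j then 0 else ((2 * VV p y j + 2 * y j + (UU p y n - VV p y n)) ^ 3
            - (2 * VV p y j + (UU p y n - VV p y n)) ^ 3)) / 24 := Finset.sum_le_sum key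
    _ = (∑ j ∈ Finset.range n,
        if p j then 0 else ((2 * VV p y j + 2 * y j + (UU p y n - VV p y n)) ^ 3
            - (2 * VV p y j + (UU p y n - VV p y n)) ^ 3)) / 24 := by
        rw [Finset.sum_div]
    _ = ((2 * VV p y n + (UU p y n - VV p y n)) ^ 3 - (UU p y n - VV p y n) ^ 3) / 24 := by
        rw [tele]
    _ = _ := by ring

lemma ite_parity_flip (i : ℕ) (z w : ℝ) :
    (if Odd i then z else w) = if Even i then w else z := by
  by_cases h : Odd i
  · rw [if_pos h, if_neg (Nat.not_even_iff_odd.mpr h)]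
  · rw [if_neg h, if_pos (Nat.not_odd_iff_even.mp h)]

lemma VV_odd (n : ℕ) : VV Odd y n = UU Even y n :=
  Finset.sum_congr rfl fun i _ => ite_parity_flip i 0 (y i)

lemma VV_even (n : ℕ) : VV Even y n = UU Odd y n :=
  Finset.sum_congr rfl fun i _ => (ite_parity_flip i (y i) 0).symm

theorem core (hy : ∀ i, 0 ≤ y i) (n : ℕ) :
    (∑ j ∈ Finset.range n, if Odd j then y j * UU Even y j * (UU Even y n - UU Even y j) else 0)
      + (∑ j ∈ Finset.range n, if Even j then y j * UU Odd y j * (UU Odd y n - UU Odd y j) else 0)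
      ≤ (UU Even y n + UU Odd y n) ^ 3 / 24 := by
  have H1 := bound Odd y hy n
  have H2 := bound Even y hy n
  simp only [VV_odd] at H1
  simp only [VV_even] at H2
  have flip1 : (∑ j ∈ Finset.range n, if Odd j then 0 else y j * UU Odd y j * (UU Odd y n - UU Odd y j))
      = ∑ j ∈ Finset.range n, if Even j then y j * UU Odd y j * (UU Odd y n - UU Odd y j) else 0 :=
    Finset.sum_congr rfl fun j _ => ite_parity_flip j 0 _
  have flip2 : (∑ j ∈ Finset.range n, if Even j then 0 else y j * UU Even y j * (UU Even y n - UU Even y j))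
      = ∑ j ∈ Finset.range n, if Odd j then y j * UU Even y j * (UU Even y n - UU Even y j) else 0 :=
    Finset.sum_congr rfl fun j _ => (ite_parity_flip j _ 0).symm
  rw [flip1] at H1
  rw [flip2] at H2
  have hcube : ((UU Odd y n + UU Even y n) ^ 3 - (UU Odd y n - UU Even y n) ^ 3)
      + ((UU Even y n + UU Odd y n) ^ 3 - (UU Even y n - UU Odd y n) ^ 3)
      = 2 * (UU Even y n + UU Odd y n) ^ 3 := by ring
  linarith

lemma innerL (y : ℕ → ℝ) {n j : ℕ} (hj : j < n) :
    (∑ i ∈ Finset.range n, if i < j ∧ Odd (j - i) then y i else 0)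
      = if Odd j then UU Even y j else UU Odd y j := by
  have hsub : Finset.range j ⊆ Finset.range n := Finset.range_subset_range.mpr hj.le
  have hz : ∀ x ∈ Finset.range n, x ∉ Finset.range j →
      (if x < j ∧ Odd (j - x) then y x else 0) = 0 := by
    intro x _ hx
    exact if_neg fun hc => hx (Finset.mem_range.mpr hc.1)
  rw [← Finset.sum_subset hsub hz]
  by_cases hOj : Odd j
  · rw [if_pos hOj]
    refine Finset.sum_congr rfl fun i hi => ?_
    have hij : i < j := Finset.mem_range.mp hi
    by_cases hei : Even i
    · rw [if_pos ⟨hij, (Nat.odd_sub hij.le).mpr (iff_of_true hOj hei)⟩, if_pos hei]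
    · rw [if_neg fun hc => hei (((Nat.odd_sub hij.le).mp hc.2).mp hOj), if_neg hei]
  · rw [if_neg hOj]
    refine Finset.sum_congr rfl fun i hi => ?_
    have hij : i < j := Finset.mem_range.mp hi
    by_cases hoi : Odd i
    · rw [if_pos ⟨hij, (Nat.odd_sub hij.le).mpr
        (iff_of_false hOj (Nat.not_even_iff_odd.mpr hoi))⟩, if_pos hoi]
    · rw [if_neg fun hc => hoi
        (Nat.not_even_iff_odd.mp fun hei => hOj (((Nat.odd_sub hij.le).mp hc.2).mpr hei)),
        if_neg hoi]

lemma innerR (y : ℕ → ℝ) {n j : ℕ} (hj : j < n) :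
    (∑ k ∈ Finset.range n, if j < k ∧ Odd (k - j) then y k else 0)
      = if Odd j then UU Even y n - UU Even y j else UU Odd y n - UU Odd y j := by
  have hsub : Finset.Ico (j + 1) n ⊆ Finset.range n := by
    rw [Finset.range_eq_Ico]
    exact Finset.Ico_subset_Ico (Nat.zero_le _) le_rfl
  have hz : ∀ x ∈ Finset.range n, x ∉ Finset.Ico (j + 1) n →
      (if j < x ∧ Odd (x - j) then y x else 0) = 0 := by
    intro x hx hxn
    refine if_neg fun hc => hxn (Finset.mem_Ico.mpr ⟨hc.1, Finset.mem_range.mp hx⟩)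
  rw [← Finset.sum_subset hsub hz]
  by_cases hOj : Odd j
  · rw [if_pos hOj]
    have e : ∀ k ∈ Finset.Ico (j + 1) n, (if j < k ∧ Odd (k - j) then y k else 0)
        = if Even k then y k else 0 := by
      intro k hk
      have hjk : j < k := (Finset.mem_Ico.mp hk).1
      by_cases hek : Even k
      · rw [if_pos ⟨hjk, (Nat.odd_sub hjk.le).mpr
          (iff_of_false (Nat.not_odd_iff_even.mpr hek) (Nat.not_even_iff_odd.mpr hOj))⟩,
          if_pos hek]
      · rw [if_neg fun hc => (Nat.not_even_iff_odd.mpr hOj)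
            (((Nat.odd_sub hjk.le).mp hc.2).mp (Nat.not_even_iff_odd.mp hek)), if_neg hek]
    rw [Finset.sum_congr rfl e, Finset.sum_Ico_eq_sub _ hj]
    have h1 : UU Even y (j + 1) = UU Even y j + if Even j then y j else 0 := UU_succ _ y j
    rw [if_neg (Nat.not_even_iff_odd.mpr hOj), add_zero] at h1
    show UU Even y n - UU Even y (j + 1) = _
    rw [h1]
  · rw [if_neg hOj]
    have hEj : Even j := Nat.not_odd_iff_even.mp hOj
    have e : ∀ k ∈ Finset.Ico (j + 1) n, (if j < k ∧ Odd (k - j) then y k else 0)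
        = if Odd k then y k else 0 := by
      intro k hk
      have hjk : j < k := (Finset.mem_Ico.mp hk).1
      by_cases hok : Odd k
      · rw [if_pos ⟨hjk, (Nat.odd_sub hjk.le).mpr (iff_of_true hok hEj)⟩, if_pos hok]
      · rw [if_neg fun hc => hok (((Nat.odd_sub hjk.le).mp hc.2).mpr hEj), if_neg hok]
    rw [Finset.sum_congr rfl e, Finset.sum_Ico_eq_sub _ hj]
    have h1 : UU Odd y (j + 1) = UU Odd y j + if Odd j then y j else 0 := UU_succ _ y j
    rw [if_neg hOj, add_zero] at h1
    show UU Odd y n - UU Odd y (j + 1) = _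
    rw [h1]

/-- extension of a vector on `Fin K` to `ℕ` by zero -/
def ext (K : ℕ) (v : Fin K → ℝ) : ℕ → ℝ := fun i => if h : i < K then v ⟨i, h⟩ else 0

lemma ext_val (K : ℕ) (v : Fin K → ℝ) (i : Fin K) : ext K v i.val = v i := by
  simp [ext]

theorem f3_repr (K : ℕ) (v : Fin K → ℝ) :
    f3 K v = (∑ j ∈ Finset.range K, if Odd j then
          ext K v j * UU Even (ext K v) j * (UU Even (ext K v) K - UU Even (ext K v) j) else 0)
      + (∑ j ∈ Finset.range K, if Even j then
          ext K v j * UU Odd (ext K v) j * (UU Odd (ext K v) K - UU Odd (ext K v) j) else 0) := by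
  set y := ext K v with hy
  have hyv : ∀ i : Fin K, y i.val = v i := ext_val K v
  have e0 : f3 K v = ∑ i : Fin K, ∑ j : Fin K, ∑ k : Fin K,
      if (i < j ∧ j < k ∧ Odd (j.val - i.val) ∧ Odd (k.val - j.val)) then v i * v j * v k
      else 0 := by
    rw [f3, Finset.sum_filter, Fintype.sum_prod_type]
    refine Finset.sum_congr rfl fun i _ => ?_
    rw [Fintype.sum_prod_type]
  have hpt : ∀ (i j k : Fin K),
      (if (i < j ∧ j < k ∧ Odd (j.val - i.val) ∧ Odd (k.val - j.val)) then v i * v j * v k else 0)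
      = (if (i < j ∧ Odd (j.val - i.val)) then v i else 0) * v j
        * (if (j < k ∧ Odd (k.val - j.val)) then v k else 0) := by
    intro i j k
    by_cases h1 : i < j ∧ Odd (j.val - i.val)
    · by_cases h2 : j < k ∧ Odd (k.val - j.val)
      · rw [if_pos h1, if_pos h2, if_pos ⟨h1.1, h2.1, h1.2, h2.2⟩]
      · rw [if_pos h1, if_neg h2, if_neg (fun hc => h2 ⟨hc.2.1, hc.2.2.2⟩), mul_zero]
    · rw [if_neg h1, if_neg (fun hc => h1 ⟨hc.1, hc.2.2.1⟩), zero_mul, zero_mul]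
  calc f3 K v
      = ∑ i : Fin K, ∑ j : Fin K, ∑ k : Fin K,
          if (i < j ∧ j < k ∧ Odd (j.val - i.val) ∧ Odd (k.val - j.val)) then v i * v j * v k
          else 0 := e0
    _ = ∑ i : Fin K, ∑ j : Fin K, ∑ k : Fin K,
          (if (i < j ∧ Odd (j.val - i.val)) then v i else 0) * v j
            * (if (j < k ∧ Odd (k.val - j.val)) then v k else 0) :=
        Finset.sum_congr rfl fun i _ => Finset.sum_congr rfl fun j _ =>
          Finset.sum_congr rfl fun k _ => hpt i j k
    _ = ∑ j : Fin K, ∑ i : Fin K, ∑ k : Fin K,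
          (if (i < j ∧ Odd (j.val - i.val)) then v i else 0) * v j
            * (if (j < k ∧ Odd (k.val - j.val)) then v k else 0) := Finset.sum_comm
    _ = ∑ j : Fin K,
          (∑ i : Fin K, if (i < j ∧ Odd (j.val - i.val)) then v i else 0) * v j
            * (∑ k : Fin K, if (j < k ∧ Odd (k.val - j.val)) then v k else 0) := by
        refine Finset.sum_congr rfl fun j _ => ?_
        rw [Finset.sum_comm]
        simp only [Finset.sum_mul, Finset.mul_sum]
    _ = ∑ j : Fin K,
          (∑ i ∈ Finset.range K, if (i < j.val ∧ Odd (j.val - i)) then y i else 0) * v j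
            * (∑ k ∈ Finset.range K, if (j.val < k ∧ Odd (k - j.val)) then y k else 0) := by
        refine Finset.sum_congr rfl fun j _ => ?_
        have hL : (∑ i : Fin K, if (i < j ∧ Odd (j.val - i.val)) then v i else 0)
            = ∑ i ∈ Finset.range K, if (i < j.val ∧ Odd (j.val - i)) then y i else 0 := by
          rw [← Fin.sum_univ_eq_sum_range
            (fun i => if (i < j.val ∧ Odd (j.val - i)) then y i else 0) K]
          exact Finset.sum_congr rfl fun i _ => by rw [← hyv i]; simp only [Fin.lt_def]
        have hR : (∑ k : Fin K, if (j < k ∧ Odd (k.val - j.val)) then v k else 0)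
            = ∑ k ∈ Finset.range K, if (j.val < k ∧ Odd (k - j.val)) then y k else 0 := by
          rw [← Fin.sum_univ_eq_sum_range
            (fun k => if (j.val < k ∧ Odd (k - j.val)) then y k else 0) K]
          exact Finset.sum_congr rfl fun k _ => by rw [← hyv k]; simp only [Fin.lt_def]
        rw [hL, hR]
    _ = ∑ j : Fin K,
          (if Odd j.val then UU Even y j.val else UU Odd y j.val) * y j.val
            * (if Odd j.val then UU Even y K - UU Even y j.val
                else UU Odd y K - UU Odd y j.val) := by
        refine Finset.sum_congr rfl fun j _ => ?_
        rw [innerL y j.isLt, innerR y j.isLt, hyv j]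
    _ = ∑ m ∈ Finset.range K,
          (if Odd m then UU Even y m else UU Odd y m) * y m
            * (if Odd m then UU Even y K - UU Even y m else UU Odd y K - UU Odd y m) :=
        Fin.sum_univ_eq_sum_range (fun m =>
          (if Odd m then UU Even y m else UU Odd y m) * y m
            * (if Odd m then UU Even y K - UU Even y m else UU Odd y K - UU Odd y m)) K
    _ = _ := by
        rw [← Finset.sum_add_distrib]
        refine Finset.sum_congr rfl fun m _ => ?_
        rcases Nat.even_or_odd m with hm | hm
        · rw [if_neg (Nat.not_odd_iff_even.mpr hm), if_neg (Nat.not_odd_iff_even.mpr hm),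
            if_neg (Nat.not_odd_iff_even.mpr hm), if_pos hm]
          ring
        · rw [if_pos hm, if_pos hm, if_pos hm, if_neg (Nat.not_even_iff_odd.mpr hm)]
          ring

/-- The key bound: on the simplex, `f3 ≤ 1/24`. -/
theorem f3_le (K : ℕ) (v : Fin K → ℝ) (hnn : ∀ i, 0 ≤ v i) (hsum : ∑ i, v i = 1) :
    f3 K v ≤ 1 / 24 := by
  set y := ext K v with hy
  have hyv : ∀ i : Fin K, y i.val = v i := ext_val K v
  have hy0 : ∀ i, 0 ≤ y i := by
    intro i
    by_cases h : i < K
    · rw [show y i = v ⟨i, h⟩ from dif_pos h]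
      exact hnn ⟨i, h⟩
    · rw [show y i = 0 from dif_neg h]
  have hsum' : UU Even y K + UU Odd y K = 1 := by
    have hpt : ∀ i ∈ Finset.range K,
        ((if Even i then y i else 0) + (if Odd i then y i else 0)) = y i := by
      intro i _
      rcases Nat.even_or_odd i with h | h
      · rw [if_pos h, if_neg (Nat.not_odd_iff_even.mpr h), add_zero]
      · rw [if_neg (Nat.not_even_iff_odd.mpr h), if_pos h, zero_add]
    calc UU Even y K + UU Odd y K = ∑ i ∈ Finset.range K, y i := by
          rw [UU, UU, ← Finset.sum_add_distrib]
          exact Finset.sum_congr rfl hpt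
      _ = ∑ i : Fin K, v i := by
          rw [← Fin.sum_univ_eq_sum_range (fun i => y i) K]
          exact Finset.sum_congr rfl fun i _ => hyv i
      _ = 1 := hsum
  have h := core y hy0 K
  rw [hsum'] at h
  norm_num at h
  calc f3 K v = _ := f3_repr K v
    _ ≤ 1 / 24 := h

end HermanAux

/-- **Bound for `f5`** (Lemma 12): if `K ≥ 3` is odd and `v ∈ D^(K)` satisfies
`f^(K)(v) > 1/27`, then `24·f5^(K)(v) < 1/216`. -/
theorem f5_bound (K : ℕ) (hK : 3 ≤ K) (hKodd : Odd K)
    (v : Fin K → ℝ) (hv : v ∈ simplexD K) (hf : fHerman K v > 1 / 27) :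
    24 * f5 K v < 1 / 216 := by
  obtain ⟨hnn, hsum⟩ := hv
  have h3 : f3 K v ≤ 1 / 24 := HermanAux.f3_le K v (fun i => (hnn i).1) hsum
  have h5 : 24 * f5 K v = f3 K v - fHerman K v := by rw [fHerman]; ring
  rw [h5]
  have h27 : fHerman K v > 1 / 27 := hf
  linarith
end

section
/- For every odd K ≥ 3 and every x ∈ ℝ^K (indices taken mod K): Σ_{k=0}^{K-1} Σ_{1<i0'<i1'<i2'<K, i0' and i2' even, i1' odd} x_{(i0'+k) mod K} x_{(i1'+k) mod K} x_{(i2'+k) mod K} = ((K−3)/2)·f3^(K)(x). -/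
set_option maxHeartbeats 2000000

def rotPhi (K : ℕ) (p : Fin K × Fin K × Fin K × Fin K) : (Fin K × Fin K × Fin K) × ℕ :=
  let k := p.1
  let v0 := p.2.1 + k
  let v1 := p.2.2.1 + k
  let v2 := p.2.2.2 + k
  if v0 < v1 then
    if v1 < v2 then ((v0, v1, v2), p.2.1.val / 2 - 1)
    else ((v2, v0, v1),
      p.2.1.val / 2 - 1 + (K - 1 - (v0.val - v2.val) - (v1.val - v0.val)) / 2)
  else ((v1, v2, v0),
    p.2.1.val / 2 - 1 + (K - 1 - (v2.val - v1.val) - (v0.val - v2.val)) / 2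
      + ((v2.val - v1.val) - 1) / 2)

def rotPsi (K : ℕ) [NeZero K] (q : (Fin K × Fin K × Fin K) × ℕ) :
    Fin K × Fin K × Fin K × Fin K :=
  let j0 := q.1.1; let j1 := q.1.2.1; let j2 := q.1.2.2
  let a := j1.val - j0.val
  let b := j2.val - j1.val
  let c0 := (K - 1 - a - b) / 2
  let c1 := (a - 1) / 2
  if q.2 < c0 then
    let i0 := 2 * (q.2 + 1)
    (j0 - Fin.ofNat K i0, Fin.ofNat K i0, Fin.ofNat K (i0 + a), Fin.ofNat K (i0 + a + b))
  else if q.2 < c0 + c1 then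
    let i0 := 2 * (q.2 - c0 + 1)
    (j1 - Fin.ofNat K i0, Fin.ofNat K i0, Fin.ofNat K (i0 + b), Fin.ofNat K (i0 + K - a))
  else
    let i0 := 2 * (q.2 - c0 - c1 + 1)
    (j2 - Fin.ofNat K i0, Fin.ofNat K i0, Fin.ofNat K (i0 + (K - a - b)),
      Fin.ofNat K (i0 + K - b))

lemma val_add {K : ℕ} (a b : Fin K) :
    (a + b).val = if a.val + b.val < K then a.val + b.val else a.val + b.val - K := by
  rw [Fin.add_def]
  have ha := a.isLt; have hb := b.isLt
  dsimp only
  split_ifs with h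
  · exact Nat.mod_eq_of_lt h
  · rw [Nat.mod_eq_sub_mod (le_of_not_gt h), Nat.mod_eq_of_lt (by omega)]

lemma val_sub {K : ℕ} (a b : Fin K) :
    (a - b).val = if b.val ≤ a.val then a.val - b.val else K + a.val - b.val := by
  rw [Fin.sub_def]
  have ha := a.isLt; have hb := b.isLt
  dsimp only
  split_ifs with h
  · rw [Nat.mod_eq_sub_mod (by omega), Nat.mod_eq_of_lt (by omega)]
    omega
  · rw [Nat.mod_eq_of_lt (by omega)]
    omega

lemma val_ofNat {K : ℕ} [NeZero K] {v : ℕ} (h : v < K) : (Fin.ofNat K v).val = v :=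
  Nat.mod_eq_of_lt h

lemma val_add_sub {K : ℕ} [NeZero K] {E F : ℕ} (j : Fin K)
    (hE : E < K) (hF : F < K) (hFE : F ≤ E) :
    ((Fin.ofNat K E) + (j - Fin.ofNat K F)).val
      = if E - F + j.val < K then E - F + j.val else E - F + j.val - K := by
  have hj := j.isLt
  rw [val_add, val_sub, val_ofNat hE, val_ofNat hF]
  split_ifs <;> omega

lemma phi_side (K : ℕ) [NeZero K] (hK : 3 ≤ K) (hK2 : K % 2 = 1) (k i0 i1 i2 : Fin K)
    (h1 : 1 < i0.val) (h2 : i0.val < i1.val) (h3 : i1.val < i2.val)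
    (h4 : i0.val % 2 = 0) (h5 : i1.val % 2 = 1) (h6 : i2.val % 2 = 0) :
    (rotPhi K (k, i0, i1, i2)).1.1.val < (rotPhi K (k, i0, i1, i2)).1.2.1.val ∧
    (rotPhi K (k, i0, i1, i2)).1.2.1.val < (rotPhi K (k, i0, i1, i2)).1.2.2.val ∧
    ((rotPhi K (k, i0, i1, i2)).1.2.1.val - (rotPhi K (k, i0, i1, i2)).1.1.val) % 2 = 1 ∧
    ((rotPhi K (k, i0, i1, i2)).1.2.2.val - (rotPhi K (k, i0, i1, i2)).1.2.1.val) % 2 = 1 ∧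
    (rotPhi K (k, i0, i1, i2)).2 < (K - 3) / 2 ∧
    rotPsi K (rotPhi K (k, i0, i1, i2)) = (k, i0, i1, i2) := by
  have hkK := k.isLt; have hi0K := i0.isLt; have hi1K := i1.isLt; have hi2K := i2.isLt
  have e0 := val_add i0 k; have e1 := val_add i1 k; have e2 := val_add i2 k
  simp only [rotPhi]
  try dsimp only
  split_ifs with hd1 hd2
  all_goals rw [Fin.lt_def] at hd1
  all_goals try rw [Fin.lt_def] at hd2
  all_goals try dsimp only
  · -- v0 < v1 < v2 : either no wrap or all wrap
    rcases Nat.lt_or_ge (i0.val + k.val) K with hw | hw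
    · have ea : (i0 + k).val = i0.val + k.val := by split_ifs at e0 e1 e2 <;> omega
      have eb : (i1 + k).val = i1.val + k.val := by split_ifs at e0 e1 e2 <;> omega
      have ec : (i2 + k).val = i2.val + k.val := by split_ifs at e0 e1 e2 <;> omega
      simp only [ea, eb, ec]
      refine ⟨by omega, by omega, by omega, by omega, by omega, ?_⟩
      simp only [rotPsi]
      try dsimp only
      try simp only [ea, eb, ec]
      split_ifs with hc1 hc2
      · simp only [Prod.mk.injEq, Fin.ext_iff]
        refine ⟨?_, ?_, ?_, ?_⟩
        · rw [val_sub, val_ofNat]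
          all_goals try simp only [ea]
          all_goals try split_ifs
          all_goals omega
        · rw [val_ofNat] <;> omega
        · rw [val_ofNat] <;> omega
        · rw [val_ofNat] <;> omega
      · exfalso; omega
      · exfalso; omega
    · have ea' : (i0 + k).val = i0.val + k.val - K ∧ K ≤ i0.val + k.val := by split_ifs at e0 e1 e2 <;> omega
      have ea := ea'.1
      have eaK := ea'.2
      have eb' : (i1 + k).val = i1.val + k.val - K ∧ K ≤ i1.val + k.val := by split_ifs at e0 e1 e2 <;> omega
      have eb := eb'.1
      have ebK := eb'.2
      have ec' : (i2 + k).val = i2.val + k.val - K ∧ K ≤ i2.val + k.val := by split_ifs at e0 e1 e2 <;> omega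
      have ec := ec'.1
      have ecK := ec'.2
      simp only [ea, eb, ec]
      refine ⟨by omega, by omega, by omega, by omega, by omega, ?_⟩
      simp only [rotPsi]
      try dsimp only
      try simp only [ea, eb, ec]
      split_ifs with hc1 hc2
      · simp only [Prod.mk.injEq, Fin.ext_iff]
        refine ⟨?_, ?_, ?_, ?_⟩
        · rw [val_sub, val_ofNat]
          all_goals try simp only [ea]
          all_goals try split_ifs
          all_goals omega
        · rw [val_ofNat] <;> omega
        · rw [val_ofNat] <;> omega
        · rw [val_ofNat] <;> omega
      · exfalso; omega
      · exfalso; omega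
  · -- only i2 wraps
    have ea : (i0 + k).val = i0.val + k.val := by split_ifs at e0 e1 e2 <;> omega
    have eb : (i1 + k).val = i1.val + k.val := by split_ifs at e0 e1 e2 <;> omega
    have ec' : (i2 + k).val = i2.val + k.val - K ∧ K ≤ i2.val + k.val := by split_ifs at e0 e1 e2 <;> omega
    have ec := ec'.1
    have ecK := ec'.2
    simp only [ea, eb, ec]
    refine ⟨by omega, by omega, by omega, by omega, by omega, ?_⟩
    simp only [rotPsi]
    try dsimp only
    try simp only [ea, eb, ec]
    split_ifs with hc1 hc2
    · exfalso; omega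
    · simp only [Prod.mk.injEq, Fin.ext_iff]
      refine ⟨?_, ?_, ?_, ?_⟩
      · rw [val_sub, val_ofNat]
        all_goals try simp only [ea]
        all_goals try split_ifs
        all_goals omega
      · rw [val_ofNat] <;> omega
      · rw [val_ofNat] <;> omega
      · rw [val_ofNat] <;> omega
    · exfalso; omega
  · -- i1 and i2 wrap
    have ea : (i0 + k).val = i0.val + k.val := by split_ifs at e0 e1 e2 <;> omega
    have eb' : (i1 + k).val = i1.val + k.val - K ∧ K ≤ i1.val + k.val := by split_ifs at e0 e1 e2 <;> omega
    have eb := eb'.1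
    have ebK := eb'.2
    have ec' : (i2 + k).val = i2.val + k.val - K ∧ K ≤ i2.val + k.val := by split_ifs at e0 e1 e2 <;> omega
    have ec := ec'.1
    have ecK := ec'.2
    simp only [ea, eb, ec]
    refine ⟨by omega, by omega, by omega, by omega, by omega, ?_⟩
    simp only [rotPsi]
    try dsimp only
    try simp only [ea, eb, ec]
    split_ifs with hc1 hc2
    · exfalso; omega
    · exfalso; omega
    · simp only [Prod.mk.injEq, Fin.ext_iff]
      refine ⟨?_, ?_, ?_, ?_⟩
      · rw [val_sub, val_ofNat]
        all_goals try simp only [ea]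
        all_goals try split_ifs
        all_goals omega
      · rw [val_ofNat] <;> omega
      · rw [val_ofNat] <;> omega
      · rw [val_ofNat] <;> omega

lemma psi_side (K : ℕ) [NeZero K] (hK : 3 ≤ K) (hK2 : K % 2 = 1) (j0 j1 j2 : Fin K) (m : ℕ)
    (h01 : j0.val < j1.val) (h12 : j1.val < j2.val)
    (ha : (j1.val - j0.val) % 2 = 1) (hb : (j2.val - j1.val) % 2 = 1)
    (hm : m < (K - 3) / 2) :
    1 < (rotPsi K ((j0, j1, j2), m)).2.1.val ∧
    (rotPsi K ((j0, j1, j2), m)).2.1.val < (rotPsi K ((j0, j1, j2), m)).2.2.1.val ∧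
    (rotPsi K ((j0, j1, j2), m)).2.2.1.val < (rotPsi K ((j0, j1, j2), m)).2.2.2.val ∧
    (rotPsi K ((j0, j1, j2), m)).2.1.val % 2 = 0 ∧
    (rotPsi K ((j0, j1, j2), m)).2.2.1.val % 2 = 1 ∧
    (rotPsi K ((j0, j1, j2), m)).2.2.2.val % 2 = 0 ∧
    rotPhi K (rotPsi K ((j0, j1, j2), m)) = ((j0, j1, j2), m) := by
  have hj0 := j0.isLt; have hj1 := j1.isLt; have hj2 := j2.isLt
  simp only [rotPsi]
  try dsimp only
  split_ifs with hm1 hm2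
  · -- r = 0
    refine ⟨?_, ?_, ?_, ?_, ?_, ?_, ?_⟩
    · rw [val_ofNat] <;> omega
    · rw [val_ofNat, val_ofNat] <;> omega
    · rw [val_ofNat, val_ofNat] <;> omega
    · rw [val_ofNat] <;> omega
    · rw [val_ofNat] <;> omega
    · rw [val_ofNat] <;> omega
    simp only [rotPhi]
    try dsimp only
    split_ifs with hd1 hd2
    · simp only [Prod.mk.injEq, Fin.ext_iff]
      refine ⟨⟨?_, ?_, ?_⟩, ?_⟩
      · rw [val_add_sub]
        all_goals try split_ifs
        all_goals omega
      · rw [val_add_sub]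
        all_goals try split_ifs
        all_goals omega
      · rw [val_add_sub]
        all_goals try split_ifs
        all_goals omega
      · rw [val_ofNat] <;> omega
    · exfalso
      rw [Fin.lt_def, val_add_sub, val_add_sub] at hd2
      all_goals try split_ifs at hd2
      all_goals omega
    · exfalso
      rw [Fin.lt_def, val_add_sub, val_add_sub] at hd1
      all_goals try split_ifs at hd1
      all_goals omega
  · -- r = 1
    refine ⟨?_, ?_, ?_, ?_, ?_, ?_, ?_⟩
    · rw [val_ofNat] <;> omega
    · rw [val_ofNat, val_ofNat] <;> omega
    · rw [val_ofNat, val_ofNat] <;> omega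
    · rw [val_ofNat] <;> omega
    · rw [val_ofNat] <;> omega
    · rw [val_ofNat] <;> omega
    simp only [rotPhi]
    try dsimp only
    split_ifs with hd1 hd2
    · exfalso
      rw [Fin.lt_def, val_add_sub, val_add_sub] at hd2
      all_goals try split_ifs at hd2
      all_goals omega
    · simp only [Prod.mk.injEq, Fin.ext_iff]
      refine ⟨⟨?_, ?_, ?_⟩, ?_⟩
      · rw [val_add_sub]
        all_goals try split_ifs
        all_goals omega
      · rw [val_add_sub]
        all_goals try split_ifs
        all_goals omega
      · rw [val_add_sub]
        all_goals try split_ifs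
        all_goals omega
      · rw [val_ofNat, val_add_sub, val_add_sub, val_add_sub]
        all_goals try split_ifs
        all_goals omega
    · exfalso
      rw [Fin.lt_def, val_add_sub, val_add_sub] at hd1
      all_goals try split_ifs at hd1
      all_goals omega
  · -- r = 2
    refine ⟨?_, ?_, ?_, ?_, ?_, ?_, ?_⟩
    · rw [val_ofNat] <;> omega
    · rw [val_ofNat, val_ofNat] <;> omega
    · rw [val_ofNat, val_ofNat] <;> omega
    · rw [val_ofNat] <;> omega
    · rw [val_ofNat] <;> omega
    · rw [val_ofNat] <;> omega
    simp only [rotPhi]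
    try dsimp only
    split_ifs with hd1 hd2
    · exfalso
      rw [Fin.lt_def, val_add_sub, val_add_sub] at hd1
      all_goals try split_ifs at hd1
      all_goals omega
    · exfalso
      rw [Fin.lt_def, val_add_sub, val_add_sub] at hd1
      all_goals try split_ifs at hd1
      all_goals omega
    · simp only [Prod.mk.injEq, Fin.ext_iff]
      refine ⟨⟨?_, ?_, ?_⟩, ?_⟩
      · rw [val_add_sub]
        all_goals try split_ifs
        all_goals omega
      · rw [val_add_sub]
        all_goals try split_ifs
        all_goals omega
      · rw [val_add_sub]
        all_goals try split_ifs
        all_goals omega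
      · rw [val_ofNat, val_add_sub, val_add_sub, val_add_sub]
        all_goals try split_ifs
        all_goals omega

/-- **Combinatorial identity** (Lemma 13): for every odd `K ≥ 3` and `x ∈ ℝ^K`,
summing over all `K` rotations of
`Σ_{1<i0'<i1'<i2'<K, i0',i2' even, i1' odd} x_{i0'+k} x_{i1'+k} x_{i2'+k}`
gives `((K-3)/2)·f3^(K)(x)` (indices mod `K`). -/
theorem rotation_sum_f3 (K : ℕ) (hK : 3 ≤ K) (hKodd : Odd K) (x : Fin K → ℝ) :
    ∑ k : Fin K, ∑ t ∈ Finset.univ.filter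
        (fun t : Fin K × Fin K × Fin K =>
          1 < t.1.val ∧ t.1.val < t.2.1.val ∧ t.2.1.val < t.2.2.val ∧
          Even t.1.val ∧ Odd t.2.1.val ∧ Even t.2.2.val),
      x (t.1 + k) * x (t.2.1 + k) * x (t.2.2 + k)
    = (((K : ℝ) - 3) / 2) * f3 K x := by
  haveI : NeZero K := ⟨by omega⟩
  obtain ⟨n, hn⟩ := hKodd
  set M : ℕ := (K - 3) / 2 with hMdef
  have hn1 : 1 ≤ n := by omega
  have hMn : M = n - 1 := by omega
  have hcast : ((K : ℝ) - 3) / 2 = (M : ℝ) := by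
    subst hn; rw [hMn]
    push_cast [Nat.cast_sub hn1]
    ring
  rw [hcast, f3, Finset.mul_sum]
  have hR : ∀ j ∈ Finset.univ.filter
      (fun t : Fin K × Fin K × Fin K =>
        t.1 < t.2.1 ∧ t.2.1 < t.2.2 ∧
        Odd (t.2.1.val - t.1.val) ∧ Odd (t.2.2.val - t.2.1.val)),
      (M : ℝ) * (x j.1 * x j.2.1 * x j.2.2)
        = ∑ m ∈ Finset.range M, x j.1 * x j.2.1 * x j.2.2 := by
    intro j _; simp [mul_comm]
  rw [Finset.sum_congr rfl hR]
  have hL : ∑ k : Fin K, ∑ t ∈ Finset.univ.filter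
        (fun t : Fin K × Fin K × Fin K =>
          1 < t.1.val ∧ t.1.val < t.2.1.val ∧ t.2.1.val < t.2.2.val ∧
          Even t.1.val ∧ Odd t.2.1.val ∧ Even t.2.2.val),
      x (t.1 + k) * x (t.2.1 + k) * x (t.2.2 + k)
      = ∑ p ∈ Finset.univ ×ˢ Finset.univ.filter
        (fun t : Fin K × Fin K × Fin K =>
          1 < t.1.val ∧ t.1.val < t.2.1.val ∧ t.2.1.val < t.2.2.val ∧
          Even t.1.val ∧ Odd t.2.1.val ∧ Even t.2.2.val),
      x (p.2.1 + p.1) * x (p.2.2.1 + p.1) * x (p.2.2.2 + p.1) :=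
    by rw [Finset.sum_product]
  have hR2 : ∑ j ∈ Finset.univ.filter
      (fun t : Fin K × Fin K × Fin K =>
        t.1 < t.2.1 ∧ t.2.1 < t.2.2 ∧
        Odd (t.2.1.val - t.1.val) ∧ Odd (t.2.2.val - t.2.1.val)),
      ∑ m ∈ Finset.range M, x j.1 * x j.2.1 * x j.2.2
      = ∑ q ∈ (Finset.univ.filter
      (fun t : Fin K × Fin K × Fin K =>
        t.1 < t.2.1 ∧ t.2.1 < t.2.2 ∧
        Odd (t.2.1.val - t.1.val) ∧ Odd (t.2.2.val - t.2.1.val))) ×ˢ Finset.range M,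
      x q.1.1 * x q.1.2.1 * x q.1.2.2 :=
    by rw [Finset.sum_product]
  rw [hL, hR2]
  refine Finset.sum_nbij' (rotPhi K) (rotPsi K) ?_ ?_ ?_ ?_ ?_
  · rintro ⟨k, i0, i1, i2⟩ hp
    simp only [Finset.mem_product, Finset.mem_filter, Finset.mem_univ, true_and,
      Finset.mem_range] at hp ⊢
    obtain ⟨g1, g2, g3, g4, g5, g6⟩ := hp
    rw [Nat.even_iff] at g4 g6
    rw [Nat.odd_iff] at g5
    have H := phi_side K (by omega) (by omega) k i0 i1 i2 g1 g2 g3 g4 g5 g6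
    obtain ⟨a1, a2, a3, a4, a5, -⟩ := H
    refine ⟨⟨a1, a2, Nat.odd_iff.mpr a3, Nat.odd_iff.mpr a4⟩, by omega⟩
  · rintro ⟨⟨j0, j1, j2⟩, m⟩ hq
    simp only [Finset.mem_product, Finset.mem_filter, Finset.mem_univ, true_and,
      Finset.mem_range] at hq ⊢
    obtain ⟨⟨g1, g2, g3, g4⟩, g5⟩ := hq
    rw [Nat.odd_iff] at g3 g4
    have H := psi_side K (by omega) (by omega) j0 j1 j2 m g1 g2 g3 g4 (by omega)
    obtain ⟨a1, a2, a3, a4, a5, a6, -⟩ := H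
    exact ⟨a1, a2, a3, Nat.even_iff.mpr a4, Nat.odd_iff.mpr a5, Nat.even_iff.mpr a6⟩
  · rintro ⟨k, i0, i1, i2⟩ hp
    simp only [Finset.mem_product, Finset.mem_filter, Finset.mem_univ, true_and] at hp
    obtain ⟨g1, g2, g3, g4, g5, g6⟩ := hp
    rw [Nat.even_iff] at g4 g6
    rw [Nat.odd_iff] at g5
    exact (phi_side K (by omega) (by omega) k i0 i1 i2 g1 g2 g3 g4 g5 g6).2.2.2.2.2
  · rintro ⟨⟨j0, j1, j2⟩, m⟩ hq
    simp only [Finset.mem_product, Finset.mem_filter, Finset.mem_univ, true_and,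
      Finset.mem_range] at hq
    obtain ⟨⟨g1, g2, g3, g4⟩, g5⟩ := hq
    rw [Nat.odd_iff] at g3 g4
    exact (psi_side K (by omega) (by omega) j0 j1 j2 m g1 g2 g3 g4 (by omega)).2.2.2.2.2.2
  · rintro ⟨k, i0, i1, i2⟩ hp
    simp only [rotPhi]
    split_ifs <;> try dsimp only
    all_goals ring
end

section
/- Let K ≥ 5 be odd, let v be an interior local maximum of f^(K), and let i1 be odd with 0 < i1 < K. Then v_0 v_{i1}·( Σ_{1<i2<K, i2 even} v_{i2} − 24·Σ_{1<i2<i3<i4<K, i2 and i4 even, i3 odd} v_{i2} v_{i3} v_{i4} ) ≥ v_0 v_{i1}·( Σ_{i1<i2<K, i2 even} v_{i2} − 24·Σ_{i1<i2<i3<i4<K, i2 and i4 even, i3 odd} v_{i2} v_{i3} v_{i4} ). -/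
noncomputable section DropAux

/-- The perturbation direction `e₀ - e₂`. -/
def uu (K : ℕ) : Fin K → ℝ := fun i => if i.val = 0 then 1 else if i.val = 2 then -1 else 0

/-- Tail pair sum `W(m) = Σ_{m<c<d<K, c odd, d even} v_c v_d`. -/
def Wt (K : ℕ) (v : Fin K → ℝ) (m : ℕ) : ℝ :=
  ∑ p ∈ Finset.univ.filter
      (fun p : Fin K × Fin K =>
        m < p.1.val ∧ p.1.val < p.2.val ∧ Odd p.1.val ∧ Even p.2.val),
    v p.1 * v p.2

/-- second-order coefficient from `f3`. -/
def E3 (K : ℕ) (v : Fin K → ℝ) : ℝ :=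
  ∑ t ∈ Finset.univ.filter
      (fun t : Fin K × Fin K × Fin K =>
        t.1 < t.2.1 ∧ t.2.1 < t.2.2 ∧
        Odd (t.2.1.val - t.1.val) ∧ Odd (t.2.2.val - t.2.1.val)),
    (uu K t.1 * uu K t.2.1 * v t.2.2 + uu K t.1 * v t.2.1 * uu K t.2.2
      + v t.1 * uu K t.2.1 * uu K t.2.2)

def e5term (K : ℕ) (v : Fin K → ℝ) (t : Fin K × Fin K × Fin K × Fin K × Fin K) : ℝ :=
    uu K t.1 * uu K t.2.1 * v t.2.2.1 * v t.2.2.2.1 * v t.2.2.2.2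
  + uu K t.1 * v t.2.1 * uu K t.2.2.1 * v t.2.2.2.1 * v t.2.2.2.2
  + uu K t.1 * v t.2.1 * v t.2.2.1 * uu K t.2.2.2.1 * v t.2.2.2.2
  + uu K t.1 * v t.2.1 * v t.2.2.1 * v t.2.2.2.1 * uu K t.2.2.2.2
  + v t.1 * uu K t.2.1 * uu K t.2.2.1 * v t.2.2.2.1 * v t.2.2.2.2
  + v t.1 * uu K t.2.1 * v t.2.2.1 * uu K t.2.2.2.1 * v t.2.2.2.2
  + v t.1 * uu K t.2.1 * v t.2.2.1 * v t.2.2.2.1 * uu K t.2.2.2.2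
  + v t.1 * v t.2.1 * uu K t.2.2.1 * uu K t.2.2.2.1 * v t.2.2.2.2
  + v t.1 * v t.2.1 * uu K t.2.2.1 * v t.2.2.2.1 * uu K t.2.2.2.2
  + v t.1 * v t.2.1 * v t.2.2.1 * uu K t.2.2.2.1 * uu K t.2.2.2.2

/-- second-order coefficient from `f5`. -/
def E5 (K : ℕ) (v : Fin K → ℝ) : ℝ :=
  ∑ t ∈ Finset.univ.filter
      (fun t : Fin K × Fin K × Fin K × Fin K × Fin K =>
        t.1 < t.2.1 ∧ t.2.1 < t.2.2.1 ∧ t.2.2.1 < t.2.2.2.1 ∧ t.2.2.2.1 < t.2.2.2.2 ∧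
        Odd (t.2.1.val - t.1.val) ∧ Odd (t.2.2.1.val - t.2.1.val) ∧
        Odd (t.2.2.2.1.val - t.2.2.1.val) ∧ Odd (t.2.2.2.2.val - t.2.2.2.1.val)),
    e5term K v t

lemma uu_mul3 {K : ℕ} (a b c : Fin K) (hab : a.val < b.val) (hbc : b.val < c.val) :
    uu K a * uu K b * uu K c = 0 := by
  simp only [uu]
  split_ifs <;> first | ring1 | (exfalso; omega)

lemma sum_comb {ι : Type*} (S : Finset ι) (A B C D : ι → ℝ) (c : ℝ)
    (h : ∀ t ∈ S, A t + B t - 2 * C t = c * D t) :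
    (∑ t ∈ S, A t) + (∑ t ∈ S, B t) - 2 * (∑ t ∈ S, C t) = c * ∑ t ∈ S, D t := by
  rw [← Finset.sum_add_distrib, Finset.mul_sum, ← Finset.sum_sub_distrib, Finset.mul_sum]
  exact Finset.sum_congr rfl h

lemma expand3_s15 (K : ℕ) (v : Fin K → ℝ) (ε : ℝ) :
    f3 K (fun i => v i + ε * uu K i) + f3 K (fun i => v i - ε * uu K i) - 2 * f3 K v
      = 2 * ε ^ 2 * E3 K v := by
  simp only [f3, E3]
  exact sum_comb _ _ _ _ _ _ fun t ht => by ring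

lemma expand5_s15 (K : ℕ) (v : Fin K → ℝ) (ε : ℝ) :
    f5 K (fun i => v i + ε * uu K i) + f5 K (fun i => v i - ε * uu K i) - 2 * f5 K v
      = 2 * ε ^ 2 * E5 K v := by
  simp only [f5, E5]
  refine sum_comb _ _ _ _ _ _ fun t ht => ?_
  simp only [Finset.mem_filter, Fin.lt_def] at ht
  obtain ⟨-, h12, h23, h34, h45, -⟩ := ht
  have h1 : uu K t.1 * uu K t.2.1 * uu K t.2.2.1 = 0 := uu_mul3 _ _ _ h12 h23
  have h2 : uu K t.1 * uu K t.2.1 * uu K t.2.2.2.1 = 0 := uu_mul3 _ _ _ h12 (by omega)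
  have h3 : uu K t.1 * uu K t.2.2.1 * uu K t.2.2.2.1 = 0 := uu_mul3 _ _ _ (by omega) h34
  have h4 : uu K t.2.1 * uu K t.2.2.1 * uu K t.2.2.2.1 = 0 := uu_mul3 _ _ _ h23 h34
  simp only [e5term]
  linear_combination (2 * ε ^ 4 * (uu K t.2.2.2.1 * v t.2.2.2.2 + v t.2.2.2.1 * uu K t.2.2.2.2)) * h1
    + (2 * ε ^ 4 * (v t.2.2.1 * uu K t.2.2.2.2)) * h2
    + (2 * ε ^ 4 * (v t.2.1 * uu K t.2.2.2.2)) * h3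
    + (2 * ε ^ 4 * (v t.1 * uu K t.2.2.2.2)) * h4

lemma E3_eq (K : ℕ) (hK : 5 ≤ K) (v : Fin K → ℝ) :
    E3 K v = -v ⟨1, by omega⟩ := by
  have h02 : E3 K v = uu K ⟨0, by omega⟩ * uu K ⟨1, by omega⟩ * v ⟨2, by omega⟩
      + uu K ⟨0, by omega⟩ * v ⟨1, by omega⟩ * uu K ⟨2, by omega⟩
      + v ⟨0, by omega⟩ * uu K ⟨1, by omega⟩ * uu K ⟨2, by omega⟩ := by
    apply Finset.sum_eq_single_of_mem
      (⟨⟨0, by omega⟩, ⟨1, by omega⟩, ⟨2, by omega⟩⟩ : Fin K × Fin K × Fin K)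
    · exact Finset.mem_filter.2 ⟨Finset.mem_univ _, Fin.mk_lt_mk.2 (by omega),
        Fin.mk_lt_mk.2 (by omega), ⟨0, rfl⟩, ⟨0, rfl⟩⟩
    · rintro ⟨a, b, c⟩ ht hne
      simp only [Finset.mem_filter, Finset.mem_univ, true_and, Fin.lt_def] at ht
      obtain ⟨hab, hbc, ho1, ho2⟩ := ht
      rw [Nat.odd_iff] at ho1 ho2
      have hne' : ¬(a.val = 0 ∧ b.val = 1 ∧ c.val = 2) := by
        rintro ⟨h1, h2, h3⟩
        exact hne (Prod.ext (Fin.ext h1) (Prod.ext (Fin.ext h2) (Fin.ext h3)))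
      have h1 : uu K a * uu K b = 0 := by
        simp only [uu]; split_ifs <;> first | ring1 | (exfalso; omega)
      have h2 : uu K a * uu K c = 0 := by
        simp only [uu]; split_ifs <;> first | ring1 | (exfalso; omega)
      have h3 : uu K b * uu K c = 0 := by
        simp only [uu]; split_ifs <;> first | ring1 | (exfalso; omega)
      linear_combination v c * h1 + v b * h2 + v a * h3
  rw [h02]
  simp [uu]

lemma E5_eq (K : ℕ) (hK : 5 ≤ K) (v : Fin K → ℝ) :
    E5 K v = -(v ⟨1, by omega⟩ * Wt K v 2) := by
  classical
  set F5 := Finset.univ.filter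
      (fun t : Fin K × Fin K × Fin K × Fin K × Fin K =>
        t.1 < t.2.1 ∧ t.2.1 < t.2.2.1 ∧ t.2.2.1 < t.2.2.2.1 ∧ t.2.2.2.1 < t.2.2.2.2 ∧
        Odd (t.2.1.val - t.1.val) ∧ Odd (t.2.2.1.val - t.2.1.val) ∧
        Odd (t.2.2.2.1.val - t.2.2.1.val) ∧ Odd (t.2.2.2.2.val - t.2.2.2.1.val)) with hF5
  set sub := F5.filter (fun t => t.1.val = 0 ∧ t.2.1.val = 1 ∧ t.2.2.1.val = 2) with hsubdef
  have hsub : sub ⊆ F5 := Finset.filter_subset _ _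
  have hzero : ∀ t ∈ F5, t ∉ sub → e5term K v t = 0 := by
    rintro ⟨a, b, c, d, e⟩ ht hns
    have hP : ¬(a.val = 0 ∧ b.val = 1 ∧ c.val = 2) := fun hp =>
      hns (Finset.mem_filter.2 ⟨ht, hp⟩)
    rw [hF5] at ht
    simp only [Finset.mem_filter, Finset.mem_univ, true_and, Fin.lt_def] at ht
    obtain ⟨hab, hbc, hcd, hde, ho1, ho2, ho3, ho4⟩ := ht
    rw [Nat.odd_iff] at ho1 ho2 ho3 ho4
    have g1 : uu K a * uu K b = 0 := by simp only [uu]; split_ifs <;> first | ring1 | (exfalso; omega)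
    have g2 : uu K a * uu K c = 0 := by simp only [uu]; split_ifs <;> first | ring1 | (exfalso; omega)
    have g3 : uu K a * uu K d = 0 := by simp only [uu]; split_ifs <;> first | ring1 | (exfalso; omega)
    have g4 : uu K a * uu K e = 0 := by simp only [uu]; split_ifs <;> first | ring1 | (exfalso; omega)
    have g5 : uu K b * uu K c = 0 := by simp only [uu]; split_ifs <;> first | ring1 | (exfalso; omega)
    have g6 : uu K b * uu K d = 0 := by simp only [uu]; split_ifs <;> first | ring1 | (exfalso; omega)
    have g7 : uu K b * uu K e = 0 := by simp only [uu]; split_ifs <;> first | ring1 | (exfalso; omega)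
    have g8 : uu K c * uu K d = 0 := by simp only [uu]; split_ifs <;> first | ring1 | (exfalso; omega)
    have g9 : uu K c * uu K e = 0 := by simp only [uu]; split_ifs <;> first | ring1 | (exfalso; omega)
    have g10 : uu K d * uu K e = 0 := by simp only [uu]; split_ifs <;> first | ring1 | (exfalso; omega)
    simp only [e5term]
    linear_combination (v c * v d * v e) * g1 + (v b * v d * v e) * g2
      + (v b * v c * v e) * g3 + (v b * v c * v d) * g4
      + (v a * v d * v e) * g5 + (v a * v c * v e) * g6 + (v a * v c * v d) * g7
      + (v a * v b * v e) * g8 + (v a * v b * v d) * g9 + (v a * v b * v c) * g10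
  have hstep : E5 K v = ∑ t ∈ sub, e5term K v t := by
    rw [E5]
    exact (Finset.sum_subset hsub hzero).symm
  rw [hstep]
  have hbij : ∑ t ∈ sub, e5term K v t
      = ∑ p ∈ Finset.univ.filter
          (fun p : Fin K × Fin K =>
            2 < p.1.val ∧ p.1.val < p.2.val ∧ Odd p.1.val ∧ Even p.2.val),
        -(v ⟨1, by omega⟩ * (v p.1 * v p.2)) := by
    refine Finset.sum_nbij' (fun t => (t.2.2.2.1, t.2.2.2.2))
      (fun p => (⟨0, by omega⟩, ⟨1, by omega⟩, ⟨2, by omega⟩, p.1, p.2)) ?_ ?_ ?_ ?_ ?_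
    · rintro ⟨a, b, c, d, e⟩ ht
      rw [hsubdef, hF5] at ht
      simp only [Finset.mem_filter, Finset.mem_univ, true_and, Fin.lt_def] at ht
      obtain ⟨⟨hab, hbc, hcd, hde, ho1, ho2, ho3, ho4⟩, h1, h2, h3⟩ := ht
      rw [Nat.odd_iff] at ho1 ho2 ho3 ho4
      simp only [Finset.mem_filter, Finset.mem_univ, true_and]
      exact ⟨by omega, hde, by rw [Nat.odd_iff]; omega, by rw [Nat.even_iff]; omega⟩
    · rintro ⟨c, d⟩ hp
      simp only [Finset.mem_filter, Finset.mem_univ, true_and] at hp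
      obtain ⟨h2c, hcd, hoc, hed⟩ := hp
      rw [Nat.odd_iff] at hoc; rw [Nat.even_iff] at hed
      rw [hsubdef, hF5]
      refine Finset.mem_filter.2 ⟨Finset.mem_filter.2 ⟨Finset.mem_univ _,
        Fin.mk_lt_mk.2 (by omega), Fin.mk_lt_mk.2 (by omega),
        Fin.lt_def.2 (show 2 < c.val by omega), Fin.lt_def.2 hcd,
        ⟨0, rfl⟩, ⟨0, rfl⟩, ?_, ?_⟩, rfl, rfl, rfl⟩
      · show Odd (c.val - 2); rw [Nat.odd_iff]; omega
      · show Odd (d.val - c.val); rw [Nat.odd_iff]; omega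
    · rintro ⟨a, b, c, d, e⟩ ht
      rw [hsubdef] at ht
      simp only [Finset.mem_filter] at ht
      obtain ⟨-, h1, h2, h3⟩ := ht
      exact Prod.ext (Fin.ext h1.symm) (Prod.ext (Fin.ext h2.symm) (Prod.ext (Fin.ext h3.symm) rfl))
    · rintro ⟨c, d⟩ _; rfl
    · rintro ⟨a, b, c, d, e⟩ ht
      rw [hsubdef, hF5] at ht
      simp only [Finset.mem_filter, Finset.mem_univ, true_and, Fin.lt_def] at ht
      obtain ⟨⟨hab, hbc, hcd, hde, ho1, ho2, ho3, ho4⟩, h1, h2, h3⟩ := ht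
      have hb : (⟨1, by omega⟩ : Fin K) = b := Fin.ext h2.symm
      rw [hb]
      simp only [e5term, uu]
      split_ifs <;> first | ring1 | (exfalso; omega)
  rw [hbij, Wt, Finset.mul_sum, ← Finset.sum_neg_distrib]

end DropAux

noncomputable section DropAux2

lemma uu_abs_le (K : ℕ) (i : Fin K) : |uu K i| ≤ 1 := by
  simp only [uu]; split_ifs <;> norm_num

lemma sum_uu (K : ℕ) (hK : 5 ≤ K) : ∑ i, uu K i = 0 := by
  classical
  have h : ∀ i : Fin K, uu K i =
      (if i = ⟨0, by omega⟩ then (1:ℝ) else 0) + (if i = ⟨2, by omega⟩ then (-1:ℝ) else 0) := by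
    intro i
    simp only [uu, Fin.ext_iff]
    split_ifs <;> try norm_num
    all_goals omega
  rw [Finset.sum_congr rfl fun i _ => h i, Finset.sum_add_distrib,
    Finset.sum_ite_eq' Finset.univ (⟨0, by omega⟩ : Fin K) (fun _ => (1:ℝ)),
    Finset.sum_ite_eq' Finset.univ (⟨2, by omega⟩ : Fin K) (fun _ => (-1:ℝ))]
  simp

lemma pair_sum_le (K : ℕ) (v : Fin K → ℝ) (hmem : ∀ i, 0 ≤ v i ∧ v i ≤ 1)
    (hsum : ∑ i, v i = 1) (a b : Fin K) (hab : a ≠ b) : v a + v b ≤ 1 := by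
  have h1 : v a + v b = ∑ i ∈ ({a, b} : Finset (Fin K)), v i := (Finset.sum_pair hab).symm
  rw [h1, ← hsum]
  exact Finset.sum_le_sum_of_subset_of_nonneg (Finset.subset_univ _)
    (fun i _ _ => (hmem i).1)

lemma key_ineq (K : ℕ) (hK : 5 ≤ K) (v : Fin K → ℝ) (hv : IsInteriorLocalMax K v) :
    24 * Wt K v 2 ≤ 1 := by
  classical
  obtain ⟨⟨hmem, hsum⟩, hpos, hmax⟩ := hv
  have hmax' : {x | fHerman K x ≤ fHerman K v} ∈ nhdsWithin v (simplexD K) := hmax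
  obtain ⟨δ, hδ, hball⟩ := Metric.mem_nhdsWithin_iff.1 hmax'
  set i0 : Fin K := ⟨0, by omega⟩ with hi0
  set i1 : Fin K := ⟨1, by omega⟩ with hi1
  set i2 : Fin K := ⟨2, by omega⟩ with hi2
  set ε : ℝ := min (δ/2) (min (v i0) (min (v i1) (v i2))) with hε
  have hεpos : 0 < ε := lt_min (by linarith) (lt_min (hpos _) (lt_min (hpos _) (hpos _)))
  have hεv0 : ε ≤ v i0 := le_trans (min_le_right _ _) (min_le_left _ _)
  have hεv1 : ε ≤ v i1 := le_trans (min_le_right _ _) (le_trans (min_le_right _ _) (min_le_left _ _))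
  have hεv2 : ε ≤ v i2 := le_trans (min_le_right _ _) (le_trans (min_le_right _ _) (min_le_right _ _))
  have hεδ : ε ≤ δ/2 := min_le_left _ _
  have h01 : v i0 + v i1 ≤ 1 := pair_sum_le K v hmem hsum i0 i1 (by simp [hi0, hi1, Fin.ext_iff])
  have h21 : v i2 + v i1 ≤ 1 := pair_sum_le K v hmem hsum i2 i1 (by simp [hi2, hi1, Fin.ext_iff])
  have hmemS : ∀ s : ℝ, |s| ≤ ε → (fun i => v i + s * uu K i) ∈ simplexD K := by
    intro s hs
    have hs1 : -ε ≤ s := neg_le_of_abs_le hs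
    have hs2 : s ≤ ε := le_of_abs_le hs
    refine ⟨fun i => ?_, ?_⟩
    · show 0 ≤ v i + s * uu K i ∧ v i + s * uu K i ≤ 1
      by_cases h0 : i = i0
      · subst h0
        have : uu K i0 = 1 := by simp [uu, hi0]
        rw [this]
        constructor <;> nlinarith
      · by_cases h2 : i = i2
        · subst h2
          have : uu K i2 = -1 := by simp [uu, hi2]
          rw [this]
          constructor <;> nlinarith
        · have : uu K i = 0 := by
            simp only [uu]
            have e0 : ¬i.val = 0 := fun h => h0 (Fin.ext h)
            have e2 : ¬i.val = 2 := fun h => h2 (Fin.ext h)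
            simp [e0, e2]
          rw [this]
          have := hmem i
          constructor <;> [nlinarith; nlinarith]
    · show ∑ i, (v i + s * uu K i) = 1
      rw [Finset.sum_add_distrib, ← Finset.mul_sum, sum_uu K hK, hsum]; ring
  have hdist : ∀ s : ℝ, |s| ≤ ε → dist (fun i => v i + s * uu K i) v < δ := by
    intro s hs
    rw [dist_pi_lt_iff hδ]
    intro i
    rw [Real.dist_eq]
    have h1 : v i + s * uu K i - v i = s * uu K i := by ring
    rw [h1, abs_mul]
    calc |s| * |uu K i| ≤ ε * 1 :=
          mul_le_mul hs (uu_abs_le K i) (abs_nonneg _) (le_of_lt hεpos)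
      _ = ε := mul_one _
      _ < δ := by linarith
  have habs : |ε| ≤ ε := by rw [abs_of_pos hεpos]
  have habs' : |(-ε)| ≤ ε := by rw [abs_neg, abs_of_pos hεpos]
  have hplus : fHerman K (fun i => v i + ε * uu K i) ≤ fHerman K v :=
    hball ⟨Metric.mem_ball.2 (hdist ε habs), hmemS ε habs⟩
  have hminus : fHerman K (fun i => v i - ε * uu K i) ≤ fHerman K v := by
    have h := hball ⟨Metric.mem_ball.2 (hdist (-ε) habs'), hmemS (-ε) habs'⟩
    have heq : (fun i => v i + (-ε) * uu K i) = (fun i => v i - ε * uu K i) := by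
      funext i; ring
    rwa [heq] at h
  have hexp : fHerman K (fun i => v i + ε * uu K i) + fHerman K (fun i => v i - ε * uu K i)
      - 2 * fHerman K v = 2 * ε ^ 2 * (E3 K v - 24 * E5 K v) := by
    simp only [fHerman]
    linear_combination expand3_s15 K v ε - 24 * expand5_s15 K v ε
  have hE : E3 K v - 24 * E5 K v ≤ 0 := by
    have h2 : 0 < 2 * ε ^ 2 := by positivity
    nlinarith [hexp, hplus, hminus]
  rw [E3_eq K hK v, E5_eq K hK v] at hE
  have hv1 : 0 < v ⟨1, by omega⟩ := hpos _
  nlinarith [hE, hv1]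

end DropAux2

/-- **Dropping terms** (Lemma 14): let `K ≥ 5` be odd, let `v` be an interior local
maximum of `f^(K)`, and let `i1` be odd with `0 < i1 < K`. Then
`v_0 v_{i1}·(Σ_{1<i2<K, i2 even} v_{i2} - 24·Σ_{1<i2<i3<i4<K, i2,i4 even, i3 odd} v_{i2} v_{i3} v_{i4})
 ≥ v_0 v_{i1}·(Σ_{i1<i2<K, i2 even} v_{i2} - 24·Σ_{i1<i2<i3<i4<K, i2,i4 even, i3 odd} v_{i2} v_{i3} v_{i4})`. -/
theorem drop_terms (K : ℕ) (hK : 5 ≤ K) (hKodd : Odd K)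
    (v : Fin K → ℝ) (hv : IsInteriorLocalMax K v)
    (i1 : Fin K) (hi1odd : Odd i1.val) (hi1pos : 0 < i1.val) :
    v ⟨0, by omega⟩ * v i1 *
      ((∑ i ∈ Finset.univ.filter (fun i : Fin K => 1 < i.val ∧ Even i.val), v i)
        - 24 * ∑ t ∈ Finset.univ.filter
            (fun t : Fin K × Fin K × Fin K =>
              1 < t.1.val ∧ t.1.val < t.2.1.val ∧ t.2.1.val < t.2.2.val ∧
              Even t.1.val ∧ Odd t.2.1.val ∧ Even t.2.2.val),
          v t.1 * v t.2.1 * v t.2.2)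
    ≥ v ⟨0, by omega⟩ * v i1 *
      ((∑ i ∈ Finset.univ.filter (fun i : Fin K => i1.val < i.val ∧ Even i.val), v i)
        - 24 * ∑ t ∈ Finset.univ.filter
            (fun t : Fin K × Fin K × Fin K =>
              i1.val < t.1.val ∧ t.1.val < t.2.1.val ∧ t.2.1.val < t.2.2.val ∧
              Even t.1.val ∧ Odd t.2.1.val ∧ Even t.2.2.val),
          v t.1 * v t.2.1 * v t.2.2) := by
  classical
  have hW2 : 24 * Wt K v 2 ≤ 1 := key_ineq K hK v hv
  obtain ⟨⟨hmem, hsum⟩, hpos, -⟩ := hv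
  rw [ge_iff_le]
  apply mul_le_mul_of_nonneg_left _ (mul_nonneg (hpos _).le (hpos _).le)
  -- W monotonicity
  have hWmono : ∀ m : ℕ, 2 ≤ m → Wt K v m ≤ Wt K v 2 := by
    intro m hm
    apply Finset.sum_le_sum_of_subset_of_nonneg
    · intro p hp
      simp only [Finset.mem_filter, Finset.mem_univ, true_and] at hp ⊢
      exact ⟨by omega, hp.2⟩
    · intro p _ _
      exact mul_nonneg (hpos _).le (hpos _).le
  -- split of the single sum
  have hXsplit : (∑ i ∈ Finset.univ.filter (fun i : Fin K => 1 < i.val ∧ Even i.val), v i)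
      = (∑ i ∈ Finset.univ.filter (fun i : Fin K => i1.val < i.val ∧ Even i.val), v i)
        + ∑ b ∈ Finset.univ.filter (fun b : Fin K => 1 < b.val ∧ b.val ≤ i1.val ∧ Even b.val), v b := by
    rw [← Finset.sum_union (by
      rw [Finset.disjoint_left]
      intro i hi hi'
      simp only [Finset.mem_filter, Finset.mem_univ, true_and] at hi hi'
      omega)]
    apply Finset.sum_congr _ (fun _ _ => rfl)
    ext i
    simp only [Finset.mem_filter, Finset.mem_univ, true_and, Finset.mem_union]
    constructor
    · rintro ⟨h1, he⟩
      rcases le_or_gt i.val i1.val with h | h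
      · exact Or.inr ⟨h1, h, he⟩
      · exact Or.inl ⟨h, he⟩
    · rintro (⟨h1, he⟩ | ⟨h1, h2, he⟩)
      · exact ⟨by omega, he⟩
      · exact ⟨h1, he⟩
  -- split of the triple sum
  have hYsplit : (∑ t ∈ Finset.univ.filter
        (fun t : Fin K × Fin K × Fin K =>
          1 < t.1.val ∧ t.1.val < t.2.1.val ∧ t.2.1.val < t.2.2.val ∧
          Even t.1.val ∧ Odd t.2.1.val ∧ Even t.2.2.val),
        v t.1 * v t.2.1 * v t.2.2)
      = (∑ t ∈ Finset.univ.filter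
          (fun t : Fin K × Fin K × Fin K =>
            i1.val < t.1.val ∧ t.1.val < t.2.1.val ∧ t.2.1.val < t.2.2.val ∧
            Even t.1.val ∧ Odd t.2.1.val ∧ Even t.2.2.val),
          v t.1 * v t.2.1 * v t.2.2)
        + ∑ t ∈ Finset.univ.filter
            (fun t : Fin K × Fin K × Fin K =>
              (1 < t.1.val ∧ t.1.val ≤ i1.val ∧ Even t.1.val) ∧
              (t.1.val < t.2.1.val ∧ t.2.1.val < t.2.2.val ∧ Odd t.2.1.val ∧ Even t.2.2.val)),
          v t.1 * v t.2.1 * v t.2.2 := by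
    rw [← Finset.sum_union (by
      rw [Finset.disjoint_left]
      intro t ht ht'
      simp only [Finset.mem_filter, Finset.mem_univ, true_and] at ht ht'
      omega)]
    apply Finset.sum_congr _ (fun _ _ => rfl)
    ext t
    simp only [Finset.mem_filter, Finset.mem_univ, true_and, Finset.mem_union]
    constructor
    · rintro ⟨h1, h2, h3, h4, h5, h6⟩
      rcases le_or_gt t.1.val i1.val with h | h
      · exact Or.inr ⟨⟨h1, h, h4⟩, h2, h3, h5, h6⟩
      · exact Or.inl ⟨h, h2, h3, h4, h5, h6⟩
    · rintro (⟨h1, h2, h3, h4, h5, h6⟩ | ⟨⟨h1, h2, h3⟩, h4, h5, h6, h7⟩)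
      · exact ⟨by omega, h2, h3, h4, h5, h6⟩
      · exact ⟨h1, h4, h5, h3, h6, h7⟩
  -- factor the middle triple sum
  have hfactor : (∑ t ∈ Finset.univ.filter
        (fun t : Fin K × Fin K × Fin K =>
          (1 < t.1.val ∧ t.1.val ≤ i1.val ∧ Even t.1.val) ∧
          (t.1.val < t.2.1.val ∧ t.2.1.val < t.2.2.val ∧ Odd t.2.1.val ∧ Even t.2.2.val)),
        v t.1 * v t.2.1 * v t.2.2)
      = ∑ b ∈ Finset.univ.filter (fun b : Fin K => 1 < b.val ∧ b.val ≤ i1.val ∧ Even b.val),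
          v b * Wt K v b.val := by
    rw [Finset.sum_filter, Finset.sum_filter, Fintype.sum_prod_type]
    apply Finset.sum_congr rfl
    intro b _
    show (∑ p : Fin K × Fin K,
        if (1 < b.val ∧ b.val ≤ i1.val ∧ Even b.val) ∧
            (b.val < p.1.val ∧ p.1.val < p.2.val ∧ Odd p.1.val ∧ Even p.2.val)
          then v b * v p.1 * v p.2 else 0)
      = if 1 < b.val ∧ b.val ≤ i1.val ∧ Even b.val then v b * Wt K v b.val else 0
    by_cases hPb : 1 < b.val ∧ b.val ≤ i1.val ∧ Even b.val
    · rw [if_pos hPb, Wt, Finset.mul_sum, Finset.sum_filter]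
      apply Finset.sum_congr rfl
      intro p _
      rw [if_congr (and_iff_right hPb) rfl rfl]
      split_ifs with h
      · ring
      · rfl
    · rw [if_neg hPb]
      exact Finset.sum_eq_zero fun p _ => if_neg (fun hc => hPb hc.1)
  -- per-term bound on the middle sum
  have hterm : ∀ b ∈ Finset.univ.filter
      (fun b : Fin K => 1 < b.val ∧ b.val ≤ i1.val ∧ Even b.val),
      24 * (v b * Wt K v b.val) ≤ v b := by
    intro b hb
    simp only [Finset.mem_filter, Finset.mem_univ, true_and] at hb
    have h2b : Wt K v b.val ≤ Wt K v 2 := hWmono b.val (by omega)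
    nlinarith [(hpos b).le, mul_le_mul_of_nonneg_left h2b (hpos b).le,
      mul_le_mul_of_nonneg_left hW2 (hpos b).le]
  have hsum24 : 24 * ∑ b ∈ Finset.univ.filter
      (fun b : Fin K => 1 < b.val ∧ b.val ≤ i1.val ∧ Even b.val), (v b * Wt K v b.val)
      ≤ ∑ b ∈ Finset.univ.filter
        (fun b : Fin K => 1 < b.val ∧ b.val ≤ i1.val ∧ Even b.val), v b := by
    rw [Finset.mul_sum]
    exact Finset.sum_le_sum hterm
  rw [hXsplit, hYsplit, hfactor]
  linarith [hsum24]
end
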